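/- arXiv:0910.3980 — 7 statements merged into one kernel-verified Lean document; each statement's English description precedes it below -/
import Mathlib

section
/- For every admissible function f : ℕ → ℝ, the inclusion map ℓ²_f → ℓ² is a compact continuous linear operator. -/
noncomputable section

/-- `f` is admissible: positive, monotone nondecreasing, and unbounded. -/
def Admissible (f : ℕ → ℝ) : Prop :=
  (∀ n, 0 < f n) ∧ Monotone f ∧ ¬ BddAbove (Set.range f)

/-- Membership in the weighted space `ℓ²_f`: `∑ f n * x n ^ 2 < ∞`. -/
def MemW (f : ℕ → ℝ) (x : ℕ → ℝ) : Prop :=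
  Summable fun n => f n * x n ^ 2

/-- The `ℓ²_f` norm of a sequence, `(∑ f n * x n ^ 2)^(1/2)`. -/
noncomputable def wNorm (f : ℕ → ℝ) (x : ℕ → ℝ) : ℝ :=
  Real.sqrt (∑' n, f n * x n ^ 2)

/-- Equivalence of positive weight functions: `(1/c) f₁ ≤ f₂ ≤ c f₁`. -/
def FEquiv (f₁ f₂ : ℕ → ℝ) : Prop :=
  ∃ c : ℝ, 0 < c ∧ ∀ n, (1 / c) * f₁ n ≤ f₂ n ∧ f₂ n ≤ c * f₁ n

/-- The Hilbert space `ℓ²` of square-summable real sequences. -/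
abbrev L2 := lp (fun _ : ℕ => ℝ) 2

/-! Monotonicity of `f` gives `f N * ∑_{n ≥ N} x n ^ 2 ≤ ∑ f n * x n ^ 2`. For `N = 0` this is the
continuity of the inclusion; for large `N` it says that the `ℓ²`-tails of a bounded subset of
`ℓ²_f` are uniformly small, as `f` is unbounded. Such a set is uniformly approximated by its
truncations to the first `N` coordinates, which form a bounded subset of a finite-dimensional
space, so it is totally bounded, and its closure in the complete space `ℓ²` is compact. -/

open Metric Finset
open scoped ENNReal

theorem totallyBounded_of_forall_exists_totallyBounded_dist_lt {X : Type*} [PseudoMetricSpace X]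
    {s : Set X} (h : ∀ ε > 0, ∃ t : Set X, TotallyBounded t ∧ ∀ x ∈ s, ∃ y ∈ t, dist x y < ε) :
    TotallyBounded s := by
  rw [Metric.totallyBounded_iff]
  intro ε hε
  obtain ⟨t, ht, hst⟩ := h (ε / 2) (half_pos hε)
  obtain ⟨u, hu, htu⟩ := Metric.totallyBounded_iff.1 ht (ε / 2) (half_pos hε)
  refine ⟨u, hu, fun x hx => ?_⟩
  obtain ⟨y, hyt, hxy⟩ := hst x hx
  obtain ⟨z, hzu, hyz⟩ := Set.mem_iUnion₂.1 (htu hyt)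
  exact Set.mem_iUnion₂.2 ⟨z, hzu, mem_ball.2 (by linarith [dist_triangle x y z, mem_ball.1 hyz])⟩

namespace lp

variable {α : Type*} [DecidableEq α] {E : α → Type*} [∀ i, NormedAddCommGroup (E i)] {p : ℝ≥0∞}

theorem totallyBounded_of_forall_norm_sub_sum_single_lt [Fact (1 ≤ p)] [∀ i, ProperSpace (E i)]
    {s : Set (lp E p)} (hs : Bornology.IsBounded s)
    (h : ∀ ε > 0, ∃ F : Finset α, ∀ x ∈ s, ‖x - ∑ i ∈ F, lp.single p i (x i)‖ < ε) :
    TotallyBounded s := by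
  obtain ⟨R, hR⟩ := isBounded_iff_forall_norm_le.1 hs
  refine totallyBounded_of_forall_exists_totallyBounded_dist_lt fun ε hε => ?_
  obtain ⟨F, hF⟩ := h ε hε
  let extendByZero : (∀ i : F, E i) → lp E p := fun c => ∑ i : F, lp.single p i (c i)
  have hcont : Continuous extendByZero :=
    continuous_finsetSum _ fun i _ => (isometry_single (i : α)).continuous.comp (continuous_apply i)
  refine ⟨extendByZero '' closedBall 0 R,
    ((isCompact_closedBall 0 R).image hcont).totallyBounded,
    fun x hx => ⟨_, ⟨fun i => x i, ?_, rfl⟩, ?_⟩⟩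
  · have hp : p ≠ 0 := (zero_lt_one.trans_le (Fact.out : 1 ≤ p)).ne'
    rw [mem_closedBall_zero_iff, pi_norm_le_iff_of_nonneg ((norm_nonneg x).trans (hR x hx))]
    exact fun i => (norm_apply_le_norm hp x i).trans (hR x hx)
  · rw [dist_eq_norm]
    simpa only [extendByZero, Finset.sum_coe_sort F fun i => lp.single p i (x i)] using hF x hx

theorem norm_sub_sum_range_single_rpow {E : ℕ → Type*} [∀ i, NormedAddCommGroup (E i)]
    (hp : 0 < p.toReal) (x : lp E p) (N : ℕ) :
    ‖x - ∑ i ∈ range N, lp.single p i (x i)‖ ^ p.toReal = ∑' n, ‖x (n + N)‖ ^ p.toReal := by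
  rw [lp.norm_compl_sum_single hp, norm_rpow_eq_tsum hp,
    ← ((lp.memℓp x).summable hp).sum_add_tsum_nat_add N, add_sub_cancel_left]

end lp

section WeightedSums

variable {f g : ℕ → ℝ}

theorem summable_of_summable_mul_of_monotone (hf₀ : 0 < f 0) (hf : Monotone f)
    (hg : ∀ n, 0 ≤ g n) (hfg : Summable fun n => f n * g n) : Summable g := by
  refine (hfg.mul_left (f 0)⁻¹).of_nonneg_of_le hg fun n => ?_
  rw [← mul_assoc]
  exact le_mul_of_one_le_left (hg n) ((one_le_inv_mul₀ hf₀).2 (hf n.zero_le))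

theorem tsum_nat_add_le_tsum_mul_div (hf₀ : 0 < f 0) (hf : Monotone f)
    (hg : ∀ n, 0 ≤ g n) (hfg : Summable fun n => f n * g n) (N : ℕ) :
    ∑' n, g (n + N) ≤ (∑' n, f n * g n) / f N := by
  have hpos (n : ℕ) : 0 < f n := hf₀.trans_le (hf n.zero_le)
  have hg_tail : Summable fun n => g (n + N) :=
    (summable_nat_add_iff N).2 (summable_of_summable_mul_of_monotone hf₀ hf hg hfg)
  rw [le_div_iff₀ (hpos N), ← tsum_mul_right]
  calc ∑' n, g (n + N) * f N ≤ ∑' n, f (n + N) * g (n + N) :=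
        (hg_tail.mul_right _).tsum_le_tsum
          (fun n => by rw [mul_comm]; exact mul_le_mul_of_nonneg_right (hf (by omega)) (hg _))
          ((summable_nat_add_iff N).2 hfg)
    _ ≤ ∑' n, f n * g n :=
        tsum_comp_le_tsum_of_inj hfg (fun n => mul_nonneg (hpos n).le (hg n))
          (add_left_injective N)

end WeightedSums

theorem L2.norm_sub_sum_range_single_sq (x : L2) (N : ℕ) :
    ‖x - ∑ i ∈ range N, lp.single 2 i (x i)‖ ^ 2 = ∑' n, x (n + N) ^ 2 := by
  simpa only [ENNReal.toReal_ofNat, Real.rpow_two, Real.norm_eq_abs, sq_abs] using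
    lp.norm_sub_sum_range_single_rpow (p := 2) (by norm_num) x N

namespace Admissible

variable {f : ℕ → ℝ}

theorem norm_sub_sum_range_single_sq_le (hf : Admissible f) {x : L2} (hx : MemW f x) (N : ℕ) :
    ‖x - ∑ i ∈ range N, lp.single 2 i (x i)‖ ^ 2 ≤ wNorm f x ^ 2 / f N := by
  rw [L2.norm_sub_sum_range_single_sq, wNorm,
    Real.sq_sqrt (tsum_nonneg fun n => mul_nonneg (hf.1 n).le (sq_nonneg _))]
  exact tsum_nat_add_le_tsum_mul_div (hf.1 0) hf.2.1 (fun n => sq_nonneg _) hx N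

theorem norm_le_wNorm_div (hf : Admissible f) {x : L2} (hx : MemW f x) :
    ‖x‖ ≤ wNorm f x / √(f 0) := by
  have h := hf.norm_sub_sum_range_single_sq_le hx 0
  rw [range_zero, sum_empty, sub_zero] at h
  calc ‖x‖ ≤ √(wNorm f x ^ 2 / f 0) := Real.le_sqrt_of_sq_le h
    _ = wNorm f x / √(f 0) := by
      rw [Real.sqrt_div' _ (hf.1 0).le, Real.sqrt_sq (show 0 ≤ wNorm f x from Real.sqrt_nonneg _)]

theorem exists_norm_sub_sum_range_single_lt (hf : Admissible f) (M : ℝ) {ε : ℝ} (hε : 0 < ε) :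
    ∃ N, ∀ x : L2, MemW f x → wNorm f x ≤ M → ‖x - ∑ i ∈ range N, lp.single 2 i (x i)‖ < ε := by
  obtain ⟨_, ⟨N, rfl⟩, hN⟩ := not_bddAbove_iff.1 hf.2.2 (M ^ 2 / ε ^ 2)
  refine ⟨N, fun x hx hxM => lt_of_pow_lt_pow_left₀ 2 hε.le ?_⟩
  calc _ ≤ wNorm f x ^ 2 / f N := hf.norm_sub_sum_range_single_sq_le hx N
    _ ≤ M ^ 2 / f N := by gcongr; exacts [(hf.1 N).le, Real.sqrt_nonneg _]
    _ < ε ^ 2 := by rwa [div_lt_iff₀ (hf.1 N), ← div_lt_iff₀' (by positivity)]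

end Admissible

/-- For every admissible `f`, the inclusion `ℓ²_f → ℓ²` is a well-defined
compact continuous linear operator: `ℓ²_f ⊆ ℓ²`, the inclusion is bounded,
and it maps bounded subsets of `ℓ²_f` to relatively compact subsets of `ℓ²`. -/
theorem inclusion_compact_continuous (f : ℕ → ℝ) (hf : Admissible f) :
    (∀ x : ℕ → ℝ, MemW f x → Memℓp x 2) ∧
    (∃ C : ℝ, 0 < C ∧ ∀ x : L2, MemW f x → ‖x‖ ≤ C * wNorm f x) ∧
    (∀ s : Set L2, (∀ x ∈ s, MemW f x) →
      (∃ M : ℝ, ∀ x ∈ s, wNorm f x ≤ M) → IsCompact (closure s)) := by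
  have hbound (x : L2) (hx : MemW f x) : ‖x‖ ≤ (√(f 0))⁻¹ * wNorm f x := by
    rw [inv_mul_eq_div]; exact hf.norm_le_wNorm_div hx
  refine ⟨fun x hx => memℓp_gen ?_, ⟨_, inv_pos.2 (Real.sqrt_pos.2 (hf.1 0)), hbound⟩,
    fun s hs ⟨M, hM⟩ => ?_⟩
  · simpa only [ENNReal.toReal_ofNat, Real.rpow_two, Real.norm_eq_abs, sq_abs] using
      summable_of_summable_mul_of_monotone (hf.1 0) hf.2.1 (fun n => sq_nonneg _) hx
  have hs_bdd : Bornology.IsBounded s := isBounded_iff_forall_norm_le.2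
    ⟨(√(f 0))⁻¹ * M, fun x hx => (hbound x (hs x hx)).trans (by gcongr; exact hM x hx)⟩
  refine (lp.totallyBounded_of_forall_norm_sub_sum_single_lt hs_bdd fun ε hε => ?_).closure
    |>.isCompact_of_isClosed isClosed_closure
  obtain ⟨N, hN⟩ := hf.exists_norm_sub_sum_range_single_lt M hε
  exact ⟨range N, fun x hx => hN x (hs x hx) (hM x hx)⟩
end
end

section
/- Let f₁ and f₂ be admissible functions. Then there exists a scale isomorphism between the pairs (ℓ², ℓ²_{f₁}) and (ℓ², ℓ²_{f₂}) if and only if f₁ ∼ f₂. -/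
noncomputable section

/-! If `f₁ ∼ f₂`, the identity is a scale isomorphism. Conversely, let `Φ` be a scale
isomorphism and `n ∈ ℕ`. A dimension count gives a nonzero `x` supported on `{0, …, n}` whose
image `Φ x` vanishes on `{0, …, n - 1}`. Since the weights are monotone,
`‖x‖_{f₁} ≤ √(f₁ n) ‖x‖` and `√(f₂ n) ‖Φ x‖ ≤ ‖Φ x‖_{f₂}`, so the bounds on `Φ` at both levels
give `f₂ n ≤ C f₁ n` with `C` independent of `n`; the same argument for `Φ⁻¹` gives the
reverse inequality. -/

theorem one_div_mul_le_iff {a b c : ℝ} (hc : 0 < c) : 1 / c * a ≤ b ↔ a ≤ c * b := by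
  rw [one_div_mul_eq_div, div_le_iff₀' hc]

theorem fEquiv_iff {f₁ f₂ : ℕ → ℝ} :
    FEquiv f₁ f₂ ↔ ∃ c, 0 < c ∧ ∀ n, f₁ n ≤ c * f₂ n ∧ f₂ n ≤ c * f₁ n :=
  exists_congr fun c => and_congr_right fun hc => forall_congr' fun n => by
    rw [one_div_mul_le_iff hc]

theorem L2.norm_sq_eq_tsum (x : L2) : ‖x‖ ^ 2 = ∑' k, x k ^ 2 := by
  rw [← real_inner_self_eq_norm_sq, lp.inner_eq_tsum]
  simp [sq]

theorem L2.summable_sq (x : L2) : Summable fun k => x k ^ 2 := by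
  simpa [sq] using lp.summable_inner (𝕜 := ℝ) x x

section Weighted

variable {f g : ℕ → ℝ} {c : ℝ} {x : ℕ → ℝ}

theorem MemW.of_le_mul (hg : ∀ n, 0 ≤ g n) (hle : ∀ n, g n ≤ c * f n) (hx : MemW f x) :
    MemW g x :=
  .of_nonneg_of_le (fun n => mul_nonneg (hg n) (sq_nonneg _))
    (fun n => by nlinarith [hle n, sq_nonneg (x n)]) (hx.mul_left c)

theorem wNorm_le_sqrt_mul (hc : 0 ≤ c) (hg : ∀ n, 0 ≤ g n) (hle : ∀ n, g n ≤ c * f n)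
    (hx : MemW f x) : wNorm g x ≤ √c * wNorm f x := by
  have hsum : ∑' n, g n * x n ^ 2 ≤ c * ∑' n, f n * x n ^ 2 := by
    rw [← tsum_mul_left]
    exact (hx.of_le_mul hg hle).tsum_le_tsum (fun n => by nlinarith [hle n, sq_nonneg (x n)])
      (hx.mul_left c)
  rw [wNorm, wNorm, ← Real.sqrt_mul hc]
  exact Real.sqrt_le_sqrt hsum

theorem memW_of_eq_zero_of_lt {n : ℕ} (hx : ∀ k, n < k → x k = 0) : MemW f x :=
  summable_of_ne_finset_zero (s := Finset.range (n + 1)) fun k hk => by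
    rw [hx k (by simpa using hk)]
    ring

theorem wNorm_le_sqrt_mul_norm {n : ℕ} (hf : Monotone f) (hfn : 0 ≤ f n) {x : L2}
    (hx : ∀ k, n < k → x k = 0) : wNorm f x ≤ √(f n) * ‖x‖ := by
  have hsum : ∑' k, f k * x k ^ 2 ≤ f n * ‖x‖ ^ 2 :=
    calc ∑' k, f k * x k ^ 2 = ∑ k ∈ Finset.range (n + 1), f k * x k ^ 2 :=
          tsum_eq_sum fun k hk => by rw [hx k (by simpa using hk)]; ring
      _ ≤ ∑ k ∈ Finset.range (n + 1), f n * x k ^ 2 :=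
          Finset.sum_le_sum fun k hk => mul_le_mul_of_nonneg_right
            (hf (Nat.lt_succ_iff.mp (Finset.mem_range.mp hk))) (sq_nonneg _)
      _ ≤ f n * ∑' k, x k ^ 2 := by
          rw [← Finset.mul_sum]
          exact mul_le_mul_of_nonneg_left
            ((L2.summable_sq x).sum_le_tsum _ fun k _ => sq_nonneg _) hfn
      _ = f n * ‖x‖ ^ 2 := by rw [L2.norm_sq_eq_tsum]
  calc wNorm f x ≤ √(f n * ‖x‖ ^ 2) := Real.sqrt_le_sqrt hsum
    _ = √(f n) * ‖x‖ := by rw [Real.sqrt_mul' _ (sq_nonneg _), Real.sqrt_sq (norm_nonneg _)]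

theorem sqrt_mul_norm_le_wNorm {n : ℕ} (hf : Monotone f) {y : L2} (hy : MemW f y)
    (hy0 : ∀ k < n, y k = 0) : √(f n) * ‖y‖ ≤ wNorm f y := by
  have hsum : f n * ‖y‖ ^ 2 ≤ ∑' k, f k * y k ^ 2 := by
    rw [L2.norm_sq_eq_tsum, ← tsum_mul_left]
    refine ((L2.summable_sq y).mul_left _).tsum_le_tsum (fun k => ?_) hy
    rcases lt_or_ge k n with hk | hk
    · simp [hy0 k hk]
    · exact mul_le_mul_of_nonneg_right (hf hk) (sq_nonneg _)
  calc √(f n) * ‖y‖ = √(f n * ‖y‖ ^ 2) := by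
        rw [Real.sqrt_mul' _ (sq_nonneg _), Real.sqrt_sq (norm_nonneg _)]
    _ ≤ wNorm f y := Real.sqrt_le_sqrt hsum

end Weighted

def extendByZero (n : ℕ) : (Fin n → ℝ) →ₗ[ℝ] L2 where
  toFun v := ⟨fun k => if h : k < n then v ⟨k, h⟩ else 0,
    (memℓp_zero ((Set.finite_lt_nat n).subset fun k hk => by
      by_contra h; exact hk (dif_neg h))).of_exponent_ge bot_le⟩
  map_add' v w := by ext k; simp only [lp.coeFn_add, Pi.add_apply]; split_ifs <;> simp [*]
  map_smul' c v := by ext k; simp only [lp.coeFn_smul, Pi.smul_apply]; split_ifs <;> simp [*]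

theorem extendByZero_apply (n : ℕ) (v : Fin n → ℝ) (k : ℕ) :
    extendByZero n v k = if h : k < n then v ⟨k, h⟩ else 0 := rfl

theorem exists_ne_zero_eq_zero_of_lt (Φ : L2 →ₗ[ℝ] L2) (n : ℕ) :
    ∃ x : L2, x ≠ 0 ∧ (∀ k, n < k → x k = 0) ∧ ∀ k < n, Φ x k = 0 := by
  let g : (Fin (n + 1) → ℝ) →ₗ[ℝ] (Fin n → ℝ) :=
    LinearMap.pi fun i => lp.evalₗ _ 2 (i : ℕ) ∘ₗ Φ ∘ₗ extendByZero (n + 1)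
  obtain ⟨v, hv, hv0⟩ := Submodule.exists_mem_ne_zero_of_ne_bot
    (g.ker_ne_bot_of_finrank_lt (by simp))
  refine ⟨extendByZero (n + 1) v, fun h => hv0 ?_, fun k hk => ?_, fun k hk => ?_⟩
  · ext i
    simpa [extendByZero_apply, i.isLt] using congrArg (fun x : L2 => x i) h
  · simp [extendByZero_apply, show ¬ k < n + 1 by omega]
  · simpa [g] using congrFun (LinearMap.mem_ker.mp hv) ⟨k, hk⟩

theorem le_sq_mul_of_scale_bounds {f₁ f₂ : ℕ → ℝ} (hf₁ : Monotone f₁) (hf₁0 : ∀ n, 0 ≤ f₁ n)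
    (hf₂ : Monotone f₂) (hf₂0 : ∀ n, 0 ≤ f₂ n) (Φ : L2 →ₗ[ℝ] L2)
    (hmaps : ∀ x : L2, MemW f₁ x → MemW f₂ (Φ x)) {a b : ℝ} (ha : 0 ≤ a) (hb : 0 ≤ b)
    (hlow : ∀ x : L2, ‖x‖ ≤ a * ‖Φ x‖)
    (hup : ∀ x : L2, MemW f₁ x → wNorm f₂ (Φ x) ≤ b * wNorm f₁ x) (n : ℕ) :
    f₂ n ≤ (a * b) ^ 2 * f₁ n := by
  obtain ⟨x, hx0, hx_tail, hΦx_head⟩ := exists_ne_zero_eq_zero_of_lt Φ n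
  have hx : MemW f₁ x := memW_of_eq_zero_of_lt hx_tail
  have hchain : √(f₂ n) * ‖x‖ ≤ a * b * √(f₁ n) * ‖x‖ :=
    calc √(f₂ n) * ‖x‖ ≤ √(f₂ n) * (a * ‖Φ x‖) := by gcongr; exact hlow x
      _ = a * (√(f₂ n) * ‖Φ x‖) := by ring
      _ ≤ a * wNorm f₂ (Φ x) := by gcongr; exact sqrt_mul_norm_le_wNorm hf₂ (hmaps x hx) hΦx_head
      _ ≤ a * (b * wNorm f₁ x) := by gcongr; exact hup x hx
      _ ≤ a * (b * (√(f₁ n) * ‖x‖)) := by gcongr; exact wNorm_le_sqrt_mul_norm hf₁ (hf₁0 n) hx_tail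
      _ = a * b * √(f₁ n) * ‖x‖ := by ring
  have hsqrt : √(f₂ n) ≤ a * b * √(f₁ n) := le_of_mul_le_mul_right hchain (norm_pos_iff.mpr hx0)
  calc f₂ n = √(f₂ n) ^ 2 := (Real.sq_sqrt (hf₂0 n)).symm
    _ ≤ (a * b * √(f₁ n)) ^ 2 := by gcongr
    _ = (a * b) ^ 2 * f₁ n := by rw [mul_pow, Real.sq_sqrt (hf₁0 n)]

/-- The scale Hilbert pairs `(ℓ², ℓ²_{f₁})` and `(ℓ², ℓ²_{f₂})` are scale
isomorphic if and only if `f₁ ∼ f₂`. A scale isomorphism is a bijective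
linear map `Φ : ℓ² → ℓ²` restricting to a bijection `ℓ²_{f₁} → ℓ²_{f₂}`,
with two-sided norm bounds on both levels. -/
theorem scale_iso_iff_equiv (f₁ f₂ : ℕ → ℝ) (h₁ : Admissible f₁) (h₂ : Admissible f₂) :
    (∃ Φ : L2 →ₗ[ℝ] L2, Function.Bijective Φ ∧
      Set.BijOn Φ {x : L2 | MemW f₁ x} {x : L2 | MemW f₂ x} ∧
      (∃ c : ℝ, 0 < c ∧ ∀ x : L2, (1 / c) * ‖x‖ ≤ ‖Φ x‖ ∧ ‖Φ x‖ ≤ c * ‖x‖) ∧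
      (∃ c : ℝ, 0 < c ∧ ∀ x : L2, MemW f₁ x →
        (1 / c) * wNorm f₁ x ≤ wNorm f₂ (Φ x) ∧ wNorm f₂ (Φ x) ≤ c * wNorm f₁ x)) ↔
    FEquiv f₁ f₂ := by
  obtain ⟨hf₁0, hf₁, -⟩ := h₁
  obtain ⟨hf₂0, hf₂, -⟩ := h₂
  replace hf₁0 n := (hf₁0 n).le
  replace hf₂0 n := (hf₂0 n).le
  rw [fEquiv_iff]
  constructor
  · rintro ⟨Φ, hbij, hBijOn, ⟨a, ha, hΦ⟩, ⟨b, hb, hΦw⟩⟩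
    let Ψ := (LinearEquiv.ofBijective Φ hbij).symm
    have hΦΨ (y : L2) : Φ (Ψ y) = y := (LinearEquiv.ofBijective Φ hbij).apply_symm_apply y
    have hΨmaps (y : L2) (hy : MemW f₂ y) : MemW f₁ (Ψ y) := by
      obtain ⟨x, hx, rfl⟩ := hBijOn.surjOn hy
      simpa [Ψ] using hx
    refine ⟨(a * b) ^ 2, by positivity, fun n => ⟨?_, ?_⟩⟩
    · refine le_sq_mul_of_scale_bounds hf₂ hf₂0 hf₁ hf₁0 Ψ.toLinearMap hΨmaps ha.le hb.le
        (fun y => ?_) (fun y hy => ?_) n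
      · simpa [hΦΨ] using (hΦ (Ψ y)).2
      · have h := (hΦw (Ψ y) (hΨmaps y hy)).1
        rwa [hΦΨ, one_div_mul_le_iff hb] at h
    · exact le_sq_mul_of_scale_bounds hf₁ hf₁0 hf₂ hf₂0 Φ (fun x hx => hBijOn.mapsTo hx) ha.le
        hb.le (fun x => (one_div_mul_le_iff ha).mp (hΦ x).1) (fun x hx => (hΦw x hx).2) n
  · rintro ⟨c, hc, hle⟩
    have hmem : {x : L2 | MemW f₁ x} = {x : L2 | MemW f₂ x} := Set.ext fun x =>
      ⟨.of_le_mul hf₂0 (hle · |>.2), .of_le_mul hf₁0 (hle · |>.1)⟩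
    refine ⟨LinearMap.id, Function.bijective_id, hmem ▸ Set.bijOn_id _, ⟨1, one_pos, by simp⟩,
      ⟨√c, Real.sqrt_pos.2 hc, fun x hx => ⟨?_, wNorm_le_sqrt_mul hc.le hf₂0 (hle · |>.2) hx⟩⟩⟩
    rw [one_div_mul_le_iff (Real.sqrt_pos.2 hc)]
    exact wNorm_le_sqrt_mul hc.le hf₁0 (hle · |>.1) (.of_le_mul hf₂0 (hle · |>.2) hx)
end
end

section
/- Let f₁, f₂ be admissible functions and let Φ : ℓ² → ℓ² be a bijective linear map which restricts to a bijection ℓ²_{f₁} → ℓ²_{f₂}, and let c > 0 be a constant such that ‖Φx‖_{ℓ²} ≤ c·‖x‖_{ℓ²} and ‖Φ⁻¹x‖_{ℓ²} ≤ c·‖x‖_{ℓ²} for all x ∈ ℓ², and ‖Φx‖_{ℓ²_{f₂}} ≤ c·‖x‖_{ℓ²_{f₁}} for all x ∈ ℓ²_{f₁} and ‖Φ⁻¹x‖_{ℓ²_{f₁}} ≤ c·‖x‖_{ℓ²_{f₂}} for all x ∈ ℓ²_{f₂}. Then f₂(n) ≤ c⁴·f₁(n) for all n. -/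
noncomputable section

/-!
Fix `n`. Since `ℝ^{n+1}` does not inject into `ℝ^n`, some nonzero `x ∈ ℓ²` supported on
`{0, …, n}` has an image `y = Φ x` vanishing on `{0, …, n - 1}`. Monotonicity of the weights
then gives `f₂ n ‖y‖² ≤ ‖y‖²_{f₂} ≤ c² ‖x‖²_{f₁} ≤ c² f₁ n ‖x‖² ≤ c⁴ f₁ n ‖y‖²`, and `y ≠ 0`.
-/

namespace lp

variable {p : ENNReal}

def finEmbed (p : ENNReal) (n : ℕ) : (Fin (n + 1) → ℝ) →ₗ[ℝ] lp (fun _ : ℕ => ℝ) p :=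
  ∑ j : Fin (n + 1), (lp.lsingle p (j : ℕ)).comp (LinearMap.proj j)

theorem finEmbed_apply {n : ℕ} (a : Fin (n + 1) → ℝ) (k : ℕ) :
    finEmbed p n a k = ∑ j : Fin (n + 1), (Pi.single (j : ℕ) (a j) : ℕ → ℝ) k := by
  simp only [finEmbed, LinearMap.sum_apply, LinearMap.comp_apply, Finset.sum_apply,
    lp.coeFn_sum, lp.lsingle_apply, lp.coeFn_single, LinearMap.proj_apply]

theorem finEmbed_apply_val {n : ℕ} (a : Fin (n + 1) → ℝ) (j : Fin (n + 1)) :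
    finEmbed p n a j = a j := by
  simp [finEmbed_apply, Pi.single_apply, Fin.val_inj]

theorem finEmbed_apply_of_lt {n k : ℕ} (a : Fin (n + 1) → ℝ) (hk : n < k) :
    finEmbed p n a k = 0 :=
  (finEmbed_apply a k).trans <| Finset.sum_eq_zero fun j _ => Pi.single_eq_of_ne (by omega) _

theorem exists_ne_zero_support_le_map_eq_zero_of_lt
    (Φ : lp (fun _ : ℕ => ℝ) p →ₗ[ℝ] lp (fun _ : ℕ => ℝ) p) (n : ℕ) :
    ∃ x ≠ 0, (∀ k, n < k → x k = 0) ∧ ∀ k < n, Φ x k = 0 := by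
  let T : (Fin (n + 1) → ℝ) →ₗ[ℝ] (Fin n → ℝ) :=
    { toFun := fun a i => Φ (finEmbed p n a) i
      map_add' := fun a b => by ext; simp
      map_smul' := fun r a => by ext; simp }
  obtain ⟨d, hdT, hd⟩ := Submodule.exists_mem_ne_zero_of_ne_bot
    (LinearMap.ker_ne_bot_of_finrank_lt (f := T) (by simp))
  refine ⟨finEmbed p n d, fun h => hd (funext fun j => ?_), fun k hk => finEmbed_apply_of_lt d hk,
    fun k hk => congrFun (LinearMap.mem_ker.1 hdT) ⟨k, hk⟩⟩
  simpa [h] using (finEmbed_apply_val (p := p) d j).symm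

end lp

section Weighted

variable {f : ℕ → ℝ}

theorem wNorm_sq (hf : ∀ n, 0 ≤ f n) (x : ℕ → ℝ) : wNorm f x ^ 2 = ∑' n, f n * x n ^ 2 :=
  Real.sq_sqrt (tsum_nonneg fun n => mul_nonneg (hf n) (sq_nonneg _))

theorem memW_of_support_le {x : ℕ → ℝ} {n : ℕ} (hx : ∀ k, n < k → x k = 0) : MemW f x :=
  summable_of_ne_finset_zero (s := Finset.range (n + 1)) fun k hk => by
    simp [hx k (by simpa using hk)]

theorem wNorm_sq_le_mul_norm_sq (hf0 : ∀ n, 0 ≤ f n) (hf : Monotone f) {x : L2} {n : ℕ}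
    (hx : ∀ k, n < k → x k = 0) : wNorm f x ^ 2 ≤ f n * ‖x‖ ^ 2 := by
  rw [wNorm_sq hf0, L2.norm_sq_eq_tsum, ← tsum_mul_left]
  refine (memW_of_support_le hx).tsum_le_tsum (fun k => ?_) ((L2.summable_sq x).mul_left _)
  rcases le_or_gt k n with hk | hk
  · exact mul_le_mul_of_nonneg_right (hf hk) (sq_nonneg _)
  · simp [hx k hk]

theorem mul_norm_sq_le_wNorm_sq (hf0 : ∀ n, 0 ≤ f n) (hf : Monotone f) {y : L2} (hy : MemW f y)
    {n : ℕ} (hy_lt : ∀ k < n, y k = 0) : f n * ‖y‖ ^ 2 ≤ wNorm f y ^ 2 := by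
  rw [wNorm_sq hf0, L2.norm_sq_eq_tsum, ← tsum_mul_left]
  refine ((L2.summable_sq y).mul_left _).tsum_le_tsum (fun k => ?_) hy
  rcases lt_or_ge k n with hk | hk
  · simp [hy_lt k hk]
  · exact mul_le_mul_of_nonneg_right (hf hk) (sq_nonneg _)

end Weighted

theorem weight_bound_of_scale_iso_general (f₁ f₂ : ℕ → ℝ)
    (h₁ : Admissible f₁) (h₂ : Admissible f₂)
    (Φ : L2 ≃ₗ[ℝ] L2)
    (hres : Set.BijOn Φ {x : L2 | MemW f₁ x} {x : L2 | MemW f₂ x})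
    (c : ℝ)
    (h0' : ∀ x : L2, ‖Φ.symm x‖ ≤ c * ‖x‖)
    (h1 : ∀ x : L2, MemW f₁ x → wNorm f₂ (Φ x) ≤ c * wNorm f₁ x) :
    ∀ n, f₂ n ≤ c ^ 4 * f₁ n := by
  intro n
  obtain ⟨x, hx0, hx_supp, hΦx⟩ := lp.exists_ne_zero_support_le_map_eq_zero_of_lt Φ.toLinearMap n
  have hf₁ : ∀ k, 0 ≤ f₁ k := fun k => (h₁.1 k).le
  have hf₂ : ∀ k, 0 ≤ f₂ k := fun k => (h₂.1 k).le
  have hx : MemW f₁ x := memW_of_support_le hx_supp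
  have hx_norm : ‖x‖ ≤ c * ‖Φ x‖ := by simpa using h0' (Φ x)
  have key : f₂ n * ‖Φ x‖ ^ 2 ≤ c ^ 4 * f₁ n * ‖Φ x‖ ^ 2 :=
    calc f₂ n * ‖Φ x‖ ^ 2 ≤ wNorm f₂ (Φ x) ^ 2 :=
          mul_norm_sq_le_wNorm_sq hf₂ h₂.2.1 (hres.mapsTo hx) hΦx
      _ ≤ (c * wNorm f₁ x) ^ 2 := pow_le_pow_left₀ (Real.sqrt_nonneg _) (h1 x hx) 2
      _ = c ^ 2 * wNorm f₁ x ^ 2 := by ring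
      _ ≤ c ^ 2 * (f₁ n * ‖x‖ ^ 2) := by gcongr; exact wNorm_sq_le_mul_norm_sq hf₁ h₁.2.1 hx_supp
      _ ≤ c ^ 2 * (f₁ n * (c * ‖Φ x‖) ^ 2) := by gcongr; exact hf₁ n
      _ = c ^ 4 * f₁ n * ‖Φ x‖ ^ 2 := by ring
  have hΦx0 : Φ x ≠ 0 := (LinearEquiv.map_ne_zero_iff Φ).2 hx0
  exact le_of_mul_le_mul_right key (by positivity)

/-- If `Φ : ℓ² → ℓ²` is a bijective linear map restricting to a bijection
`ℓ²_{f₁} → ℓ²_{f₂}`, with `Φ, Φ⁻¹` bounded by `c` on the `ℓ²` level and on the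
weighted level, then `f₂(n) ≤ c⁴ · f₁(n)` for all `n`. -/
theorem weight_bound_of_scale_iso (f₁ f₂ : ℕ → ℝ)
    (h₁ : Admissible f₁) (h₂ : Admissible f₂)
    (Φ : L2 ≃ₗ[ℝ] L2)
    (hres : Set.BijOn Φ {x : L2 | MemW f₁ x} {x : L2 | MemW f₂ x})
    (c : ℝ) (hc : 0 < c)
    (h0 : ∀ x : L2, ‖Φ x‖ ≤ c * ‖x‖)
    (h0' : ∀ x : L2, ‖Φ.symm x‖ ≤ c * ‖x‖)
    (h1 : ∀ x : L2, MemW f₁ x → wNorm f₂ (Φ x) ≤ c * wNorm f₁ x)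
    (h1' : ∀ x : L2, MemW f₂ x → wNorm f₁ (Φ.symm x) ≤ c * wNorm f₂ x) :
    ∀ n, f₂ n ≤ c ^ 4 * f₁ n :=
  weight_bound_of_scale_iso_general f₁ f₂ h₁ h₂ Φ hres c h0' h1
end
end

section
/- Let H and W be real Hilbert spaces with H infinite-dimensional, and let ι : W → H be an injective compact continuous linear map with dense range. Then there exist an admissible function f : ℕ → ℝ and a surjective linear isometry Φ : H → ℓ² such that Φ ∘ ι maps W bijectively onto ℓ²_f and ‖Φ(ι w)‖_{ℓ²_f} = ‖w‖_W for all w ∈ W. -/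
noncomputable section

/-!
`T = ι† ι` is a compact positive operator on `W`, injective because `ι` is. Pick unit
eigenvectors `e n` of `T` greedily, each maximising the Rayleigh quotient `⟪T y, y⟫` on the
orthogonal complement of the previous ones; such a maximiser exists because for a compact
positive operator `‖T‖` is in the spectrum and hence an eigenvalue. The eigenvalues
`μ n = ‖ι (e n)‖²` decrease, and tend to `0` by compactness. A vector `y` orthogonal to every
`e n` has `‖ι y‖² ≤ μ n ‖y‖²` for all `n`, so `y = 0`: the `e n` form a Hilbert basis of `W`.
The normalised images `ι (e n) / ‖ι (e n)‖` form a Hilbert basis of `H` (the range of `ι` is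
dense), in whose coordinates `ι` multiplies the `n`-th coordinate by `√(μ n)`. Hence `ι W` is
`ℓ²_f` isometrically for the weight `f n = 1 / μ n`.
-/

section

open Module End ContinuousLinearMap Submodule Filter Topology
open scoped RealInnerProductSpace

section RCLike

variable {𝕜 E : Type*} [RCLike 𝕜] [NormedAddCommGroup E] [InnerProductSpace 𝕜 E]

theorem Submodule.mem_orthogonal_span_iff {s : Set E} {y : E} :
    y ∈ (span 𝕜 s)ᗮ ↔ ∀ u ∈ s, inner 𝕜 u y = 0 := by
  refine ⟨fun h u hu => inner_right_of_mem_orthogonal (subset_span hu) h, fun h => ?_⟩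
  have hs : span 𝕜 s ≤ (𝕜 ∙ y)ᗮ :=
    span_le.2 fun u hu => mem_orthogonal_singleton_iff_inner_left.2 (h u hu)
  exact orthogonal_le hs (le_orthogonal_orthogonal _ (mem_span_singleton_self y))

theorem ContinuousLinearMap.IsPositive.norm_mem_spectrum [Nontrivial E] {T : E →L[𝕜] E}
    (hT : T.IsPositive) : algebraMap ℝ 𝕜 ‖T‖ ∈ spectrum 𝕜 T := fun h => by
  obtain ⟨ε, hε, hle⟩ := T.rayleighQuotient_le_of_norm_mem_resolventSet h
  have hsup : ⨆ x, |T.rayleighQuotient x| ≤ ‖T‖ - ε := ciSup_le fun x => by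
    have : 0 ≤ T.rayleighQuotient x := div_nonneg (hT.re_inner_nonneg_left x) (by positivity)
    exact (abs_of_nonneg this).trans_le (hle x)
  rw [← T.norm_eq_iSup_rayleighQuotient hT.isSymmetric] at hsup
  linarith

theorem IsCompactOperator.hasEigenvalue_norm_of_isPositive [CompleteSpace E] [Nontrivial E]
    {T : E →L[𝕜] E} (hc : IsCompactOperator T) (hT : T.IsPositive) :
    HasEigenvalue (T : End 𝕜 E) (‖T‖ : 𝕜) := by
  by_cases h0 : T = 0
  · obtain ⟨v, hv⟩ := exists_ne (0 : E)
    subst h0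
    exact hasEigenvalue_of_hasEigenvector ⟨by simp, hv⟩
  · exact (hc.hasEigenvalue_iff_mem_spectrum (by simpa using h0)).2 hT.norm_mem_spectrum

end RCLike

section Real

variable {E : Type*} [NormedAddCommGroup E] [InnerProductSpace ℝ E]

theorem IsCompactOperator.tendsto_eigenvalues_zero {T : E →L[ℝ] E} (hc : IsCompactOperator T)
    {e : ℕ → E} (he : Orthonormal ℝ e) {μ : ℕ → ℝ} (hTe : ∀ n, T (e n) = μ n • e n)
    (hμ : Antitone μ) (hμ0 : ∀ n, 0 ≤ μ n) : Tendsto μ atTop (𝓝 0) := by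
  have hbdd : BddBelow (Set.range μ) := ⟨0, by rintro _ ⟨n, rfl⟩; exact hμ0 n⟩
  obtain ⟨c, hc0, hcle, hlim⟩ : ∃ c, 0 ≤ c ∧ (∀ n, c ≤ μ n) ∧ Tendsto μ atTop (𝓝 c) :=
    ⟨_, le_ciInf hμ0, ciInf_le hbdd, tendsto_atTop_ciInf hμ hbdd⟩
  obtain rfl | hcpos := hc0.eq_or_lt
  · exact hlim
  -- The `T (e n)` are pairwise orthogonal of norm `≥ c > 0`, so no subsequence is Cauchy.
  have hsep {i j : ℕ} (hij : i ≠ j) : c ≤ dist (T (e i)) (T (e j)) := by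
    have hperp : ⟪μ i • e i, μ j • e j⟫ = 0 := by
      rw [real_inner_smul_left, real_inner_smul_right, he.2 hij, mul_zero, mul_zero]
    have hpyth := norm_sub_sq_eq_norm_sq_add_norm_sq_real hperp
    rw [norm_smul, norm_smul, he.1, he.1, Real.norm_of_nonneg (hμ0 i),
      Real.norm_of_nonneg (hμ0 j)] at hpyth
    rw [dist_eq_norm, hTe, hTe]
    nlinarith [hcle i, norm_nonneg (μ i • e i - μ j • e j)]
  obtain ⟨z, -, φ, hφ, hz⟩ := (hc.isCompact_closure_image_closedBall 1).tendsto_subseq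
    (x := fun n => T (e n)) fun n => subset_closure ⟨e n, by simp [he.1 n], rfl⟩
  obtain ⟨N, hN⟩ := Metric.cauchySeq_iff'.1 hz.cauchySeq c hcpos
  exact absurd (hN (N + 1) N.le_succ) (not_lt.2 (hsep (hφ N.lt_succ_self).ne'))

structure IsTopEigenvectorOn (T : E →L[ℝ] E) (U : Submodule ℝ E) (x : E) : Prop where
  mem : x ∈ U
  norm_eq_one : ‖x‖ = 1
  apply_eq : T x = ⟪T x, x⟫ • x
  inner_map_self_le : ∀ y ∈ U, ⟪T y, y⟫ ≤ ⟪T x, x⟫ * ‖y‖ ^ 2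

theorem exists_isTopEigenvectorOn {T : E →L[ℝ] E} (hc : IsCompactOperator T)
    (hT : T.IsPositive) {U : Submodule ℝ E} [CompleteSpace U] (hU : U ≠ ⊥)
    (hTU : ∀ x ∈ U, T x ∈ U) : ∃ x, IsTopEigenvectorOn T U x := by
  have : Nontrivial U := nontrivial_iff_ne_bot.2 hU
  set S : U →L[ℝ] U := U.orthogonalProjectionOnto ∘L T ∘L U.subtypeL
  have hSapply (y : U) : (S y : E) = T y :=
    congrArg Subtype.val (U.orthogonalProjectionOnto_mem_subspace_eq_self ⟨T y, hTU y y.2⟩)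
  have hSc : IsCompactOperator S := (hc.comp_clm U.subtypeL).clm_comp U.orthogonalProjectionOnto
  have hS : HasEigenvalue (S : End ℝ U) ‖S‖ :=
    hSc.hasEigenvalue_norm_of_isPositive (hT.orthogonalProjectionOnto_comp U)
  obtain ⟨v, hvS, hv0⟩ := hS.exists_hasEigenvector
  replace hvS : S v = ‖S‖ • v := by simpa [mem_eigenspace_iff] using hvS
  have hv : ‖(v : E)‖ ≠ 0 := by simpa using hv0
  set x : E := ‖(v : E)‖⁻¹ • (v : E)
  have hx1 : ‖x‖ = 1 := by simp [x, norm_smul, hv]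
  have hTx : T x = ‖S‖ • x := by
    rw [map_smul, ← hSapply, hvS, coe_smul, smul_comm]
  have hTxx : ⟪T x, x⟫ = ‖S‖ := by
    rw [hTx, real_inner_smul_left, real_inner_self_eq_norm_sq, hx1]; ring
  refine ⟨x, U.smul_mem _ v.2, hx1, by rw [hTxx, hTx], fun y hy => ?_⟩
  rw [hTxx]
  calc ⟪T y, y⟫ ≤ ‖S ⟨y, hy⟩‖ * ‖y‖ := by
        rw [← hSapply ⟨y, hy⟩]; exact real_inner_le_norm _ _
    _ ≤ ‖S‖ * ‖y‖ * ‖y‖ := by gcongr; exact S.le_opNorm ⟨y, hy⟩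
    _ = ‖S‖ * ‖y‖ ^ 2 := by ring

def topEigenvectorSeq (T : E →L[ℝ] E) : ℕ → E
  | n => Classical.epsilon
      (IsTopEigenvectorOn T (span ℝ (Set.range fun k : Fin n => topEigenvectorSeq T k))ᗮ)

section TopEigenvectorSeq

variable [CompleteSpace E] {T : E →L[ℝ] E} (hc : IsCompactOperator T) (hT : T.IsPositive)
  (hE : ¬ FiniteDimensional ℝ E)
include hc hT hE

theorem isTopEigenvectorOn_topEigenvectorSeq (n : ℕ) :
    IsTopEigenvectorOn T (span ℝ (Set.range fun k : Fin n => topEigenvectorSeq T k))ᗮ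
      (topEigenvectorSeq T n) := by
  induction n using Nat.strong_induction_on with
  | _ n ih =>
    rw [topEigenvectorSeq]
    apply Classical.epsilon_spec
    set V := span ℝ (Set.range fun k : Fin n => topEigenvectorSeq T k)
    have : FiniteDimensional ℝ V := FiniteDimensional.span_of_finite ℝ (Set.finite_range _)
    refine exists_isTopEigenvectorOn hc hT ?_ fun x hx => ?_
    · rw [Ne, orthogonal_eq_bot_iff]
      intro hV
      exact hE (Module.finite_def.2 (hV ▸ fg_span (Set.finite_range _)))
    · rw [mem_orthogonal_span_iff] at hx ⊢
      rintro _ ⟨k, rfl⟩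
      rw [← hT.inner_left_eq_inner_right, (ih k k.2).apply_eq, real_inner_smul_left,
        hx _ ⟨k, rfl⟩, mul_zero]

theorem orthonormal_topEigenvectorSeq : Orthonormal ℝ (topEigenvectorSeq T) := by
  have horth {i j : ℕ} (hij : i < j) : ⟪topEigenvectorSeq T i, topEigenvectorSeq T j⟫ = 0 :=
    mem_orthogonal_span_iff.1 (isTopEigenvectorOn_topEigenvectorSeq hc hT hE j).mem _
      ⟨⟨i, hij⟩, rfl⟩
  refine ⟨fun n => (isTopEigenvectorOn_topEigenvectorSeq hc hT hE n).norm_eq_one,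
    fun i j hij => ?_⟩
  rcases hij.lt_or_gt with h | h
  · exact horth h
  · rw [real_inner_comm, horth h]

theorem inner_map_self_le_of_orthogonal_topEigenvectorSeq {n : ℕ} {y : E}
    (hy : ∀ k < n, ⟪topEigenvectorSeq T k, y⟫ = 0) :
    ⟪T y, y⟫ ≤ ⟪T (topEigenvectorSeq T n), topEigenvectorSeq T n⟫ * ‖y‖ ^ 2 :=
  (isTopEigenvectorOn_topEigenvectorSeq hc hT hE n).inner_map_self_le y
    (mem_orthogonal_span_iff.2 (by rintro _ ⟨k, rfl⟩; exact hy k k.2))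

theorem antitone_inner_map_topEigenvectorSeq :
    Antitone fun n => ⟪T (topEigenvectorSeq T n), topEigenvectorSeq T n⟫ := by
  have he := orthonormal_topEigenvectorSeq hc hT hE
  refine antitone_nat_of_succ_le fun n => ?_
  have := inner_map_self_le_of_orthogonal_topEigenvectorSeq hc hT hE (n := n)
    (y := topEigenvectorSeq T (n + 1)) fun k hk => he.2 (by omega)
  rwa [he.1, one_pow, mul_one] at this

theorem tendsto_inner_map_topEigenvectorSeq :
    Tendsto (fun n => ⟪T (topEigenvectorSeq T n), topEigenvectorSeq T n⟫) atTop (𝓝 0) :=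
  hc.tendsto_eigenvalues_zero (orthonormal_topEigenvectorSeq hc hT hE)
    (fun n => (isTopEigenvectorOn_topEigenvectorSeq hc hT hE n).apply_eq)
    (antitone_inner_map_topEigenvectorSeq hc hT hE) fun _ => hT.inner_nonneg_left _

end TopEigenvectorSeq

theorem HilbertBasis.hasSum_repr_sq {κ : Type*} (b : HilbertBasis κ ℝ E) (w : E) :
    HasSum (fun i => b.repr w i ^ 2) (‖w‖ ^ 2) := by
  simpa [← sq] using lp.hasSum_inner (𝕜 := ℝ) (b.repr w) (b.repr w)

end Real

section Singular

variable {W H : Type*} [NormedAddCommGroup W] [InnerProductSpace ℝ W] [CompleteSpace W]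
  [NormedAddCommGroup H] [InnerProductSpace ℝ H] [CompleteSpace H]

theorem exists_hilbertBasis_adjoint_apply_eq_smul (ι : W →L[ℝ] H) (hinj : Function.Injective ι)
    (hcpt : IsCompactOperator ι) (hW : ¬ FiniteDimensional ℝ W) :
    ∃ b : HilbertBasis ℕ ℝ W, (∀ n, adjoint ι (ι (b n)) = ‖ι (b n)‖ ^ 2 • b n) ∧
      Antitone (fun n => ‖ι (b n)‖ ^ 2) ∧ Tendsto (fun n => ‖ι (b n)‖ ^ 2) atTop (𝓝 0) := by
  set T := adjoint ι ∘L ι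
  have hT : T.IsPositive := isPositive_adjoint_comp_self ι
  have hc : IsCompactOperator T := hcpt.clm_comp (adjoint ι)
  have hTι (w : W) : ⟪T w, w⟫ = ‖ι w‖ ^ 2 := by
    rw [comp_apply, adjoint_inner_left, real_inner_self_eq_norm_sq]
  have hsp : (span ℝ (Set.range (topEigenvectorSeq T)))ᗮ = ⊥ := by
    refine (Submodule.eq_bot_iff _).2 fun y hy => hinj ?_
    rw [mem_orthogonal_span_iff] at hy
    have hle : ‖ι y‖ ^ 2 ≤ 0 := by
      refine ge_of_tendsto' (by simpa using
        (tendsto_inner_map_topEigenvectorSeq hc hT hW).mul_const (‖y‖ ^ 2)) fun n => ?_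
      rw [← hTι]
      exact inner_map_self_le_of_orthogonal_topEigenvectorSeq hc hT hW fun k _ => hy _ ⟨k, rfl⟩
    rw [map_zero, ← norm_eq_zero]
    exact pow_eq_zero_iff two_ne_zero |>.1 (le_antisymm hle (by positivity))
  refine ⟨HilbertBasis.mkOfOrthogonalEqBot (orthonormal_topEigenvectorSeq hc hT hW) hsp, ?_⟩
  simp only [HilbertBasis.coe_mkOfOrthogonalEqBot, ← hTι]
  exact ⟨fun n => (isTopEigenvectorOn_topEigenvectorSeq hc hT hW n).apply_eq,
    antitone_inner_map_topEigenvectorSeq hc hT hW, tendsto_inner_map_topEigenvectorSeq hc hT hW⟩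

theorem exists_hilbertBasis_repr_map_eq {κ : Type*} (ι : W →L[ℝ] H) (hdense : DenseRange ι)
    (b : HilbertBasis κ ℝ W) (hb : ∀ i, adjoint ι (ι (b i)) = ‖ι (b i)‖ ^ 2 • b i)
    (hb0 : ∀ i, ι (b i) ≠ 0) :
    ∃ c : HilbertBasis κ ℝ H, ∀ w i, c.repr (ι w) i = ‖ι (b i)‖ * b.repr w i := by
  have hιb (i : κ) (w : W) : ⟪ι (b i), ι w⟫ = ‖ι (b i)‖ ^ 2 * b.repr w i := by
    rw [← adjoint_inner_left, hb, real_inner_smul_left, b.repr_apply_apply]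
  set h : κ → H := fun i => ‖ι (b i)‖⁻¹ • ι (b i)
  have hh : Orthonormal ℝ h := by
    refine ⟨fun i => norm_smul_inv_norm (hb0 i), fun i j hij => ?_⟩
    simp only [h, real_inner_smul_left, real_inner_smul_right, hιb, b.repr_apply_apply,
      b.orthonormal.2 hij, mul_zero]
  have hsp : (span ℝ (Set.range h))ᗮ = ⊥ := by
    refine (Submodule.eq_bot_iff _).2 fun y hy => ?_
    rw [mem_orthogonal_span_iff] at hy
    have hadj : adjoint ι y = 0 := b.repr.injective <| lp.ext <| funext fun i => by
      have := hy _ ⟨i, rfl⟩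
      simp only [h, real_inner_smul_left, mul_eq_zero, inv_eq_zero, norm_eq_zero, hb0 i,
        false_or] at this
      simp [b.repr_apply_apply, adjoint_inner_right, this]
    have hperp : (fun x => ⟪x, y⟫) = fun _ => (0 : ℝ) :=
      hdense.equalizer (by fun_prop) continuous_const <| funext fun w => by
        simp [← adjoint_inner_right, hadj]
    simpa using congrFun hperp y
  refine ⟨HilbertBasis.mkOfOrthogonalEqBot hh hsp, fun w i => ?_⟩
  rw [HilbertBasis.repr_apply_apply, HilbertBasis.coe_mkOfOrthogonalEqBot, real_inner_smul_left,
    hιb]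
  field_simp [norm_ne_zero_iff.2 (hb0 i)]

end Singular

section Weighted

variable {W : Type*} [NormedAddCommGroup W] [InnerProductSpace ℝ W]
  (b : HilbertBasis ℕ ℝ W) {s : ℕ → ℝ} (hs : ∀ n, s n ≠ 0) {F : W → L2}
  (hF : ∀ w n, F w n = s n * b.repr w n)
include hs hF

theorem wNorm_eq_norm_of_apply_eq_mul_repr (w : W) :
    wNorm (fun n => (s n ^ 2)⁻¹) (F w) = ‖w‖ := by
  have hterm (n : ℕ) : (s n ^ 2)⁻¹ * F w n ^ 2 = b.repr w n ^ 2 := by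
    rw [hF]; field_simp [hs n]
  rw [wNorm, funext hterm, (b.hasSum_repr_sq w).tsum_eq, Real.sqrt_sq (norm_nonneg w)]

theorem bijOn_memW_of_apply_eq_mul_repr :
    Set.BijOn F Set.univ {x : L2 | MemW (fun n => (s n ^ 2)⁻¹) x} := by
  refine ⟨fun w _ => (b.hasSum_repr_sq w).summable.congr fun n => ?_, fun w _ w' _ h => ?_,
    fun x hx => ?_⟩
  · rw [hF]; field_simp [hs n]
  · refine b.repr.injective (lp.ext (funext fun n => mul_left_cancel₀ (hs n) ?_))
    rw [← hF, ← hF, h]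
  · have hg : Memℓp (fun n => x n / s n) 2 := memℓp_gen <| hx.congr fun n => by
      simp only [ENNReal.toReal_ofNat, Real.rpow_two, Real.norm_eq_abs, sq_abs, div_pow]
      field_simp [hs n]
    refine ⟨b.repr.symm ⟨_, hg⟩, trivial, lp.ext (funext fun n => ?_)⟩
    rw [hF, LinearIsometryEquiv.apply_symm_apply]
    field_simp [hs n]

end Weighted

theorem admissible_inv_of_antitone_of_tendsto_zero {μ : ℕ → ℝ} (hpos : ∀ n, 0 < μ n)
    (hanti : Antitone μ) (hlim : Tendsto μ atTop (𝓝 0)) : Admissible fun n => (μ n)⁻¹ :=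
  ⟨fun n => inv_pos.2 (hpos n), fun _ _ hij => inv_anti₀ (hpos _) (hanti hij),
    not_bddAbove_of_tendsto_atTop
      (tendsto_nhdsWithin_iff.2 ⟨hlim, .of_forall hpos⟩).inv_tendsto_nhdsGT_zero⟩

theorem FiniteDimensional.of_denseRange {𝕜 V V' : Type*} [NontriviallyNormedField 𝕜]
    [CompleteSpace 𝕜] [AddCommGroup V] [Module 𝕜 V] [FiniteDimensional 𝕜 V] [AddCommGroup V']
    [Module 𝕜 V'] [TopologicalSpace V'] [IsTopologicalAddGroup V'] [ContinuousSMul 𝕜 V']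
    [T2Space V'] {f : V →ₗ[𝕜] V'} (hf : DenseRange f) : FiniteDimensional 𝕜 V' := by
  have hclosed : IsClosed (Set.range f) := by
    rw [← LinearMap.coe_range]; exact (LinearMap.range f).closed_of_finiteDimensional
  exact Module.Finite.of_surjective f
    (Set.range_eq_univ.1 (hclosed.closure_eq ▸ hf.closure_range))

end

/-- If `H` is an infinite-dimensional real Hilbert space and `ι : W → H` is an
injective compact continuous linear map with dense range, then there are an
admissible `f` and a surjective linear isometry `Φ : H → ℓ²` such that `Φ ∘ ι`
maps `W` bijectively onto `ℓ²_f` and carries `‖·‖_W` to `‖·‖_{ℓ²_f}`. -/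
theorem exists_scale_isometry_to_weighted {H W : Type*}
    [NormedAddCommGroup H] [InnerProductSpace ℝ H] [CompleteSpace H]
    [NormedAddCommGroup W] [InnerProductSpace ℝ W] [CompleteSpace W]
    (hinf : ¬ FiniteDimensional ℝ H)
    (ι : W →L[ℝ] H) (hinj : Function.Injective ι) (hcpt : IsCompactOperator ι)
    (hdense : DenseRange ι) :
    ∃ f : ℕ → ℝ, Admissible f ∧ ∃ Φ : H ≃ₗᵢ[ℝ] L2,
      Set.BijOn (fun w => Φ (ι w)) Set.univ {x : L2 | MemW f x} ∧
      ∀ w : W, wNorm f (Φ (ι w)) = ‖w‖ := by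
  have hW : ¬ FiniteDimensional ℝ W := fun _ =>
    hinf (FiniteDimensional.of_denseRange (f := (ι : W →ₗ[ℝ] H)) hdense)
  obtain ⟨b, hb, hanti, hlim⟩ := exists_hilbertBasis_adjoint_apply_eq_smul ι hinj hcpt hW
  have hb0 (n : ℕ) : ι (b n) ≠ 0 := (map_ne_zero_iff ι hinj).2 (b.orthonormal.ne_zero n)
  have hs (n : ℕ) : ‖ι (b n)‖ ≠ 0 := norm_ne_zero_iff.2 (hb0 n)
  obtain ⟨c, hc⟩ := exists_hilbertBasis_repr_map_eq ι hdense b hb hb0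
  exact ⟨_, admissible_inv_of_antitone_of_tendsto_zero
      (fun n => pow_pos (norm_pos_iff.2 (hb0 n)) 2) hanti hlim,
    c.repr, bijOn_memW_of_apply_eq_mul_repr b hs hc, wNorm_eq_norm_of_apply_eq_mul_repr b hs hc⟩
end
end

section
/- Let f₁ and f₂ be admissible functions and suppose there exists a surjective linear isometry Φ : ℓ² → ℓ² which maps ℓ²_{f₁} bijectively onto ℓ²_{f₂} with ‖Φx‖_{ℓ²_{f₂}} = ‖x‖_{ℓ²_{f₁}} for all x ∈ ℓ²_{f₁}. Then f₁ = f₂. -/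
noncomputable section

/-!
Fix `n`. The `n + 1`-dimensional space of sequences supported on `{0, …, n}` has an image
under `Φ` that must meet the codimension-`n` space of sequences vanishing on `{0, …, n - 1}`;
take `x ≠ 0` in the preimage of that intersection. Monotonicity of the weights and
`‖Φ x‖ = ‖x‖` give `f₂ n ‖x‖² ≤ ‖Φ x‖²_{f₂} = ‖x‖²_{f₁} ≤ f₁ n ‖x‖²`, so `f₂ ≤ f₁`;
applying this to `Φ⁻¹` gives the reverse inequality.
-/

namespace WeightedSeq

theorem hasSum_sq (x : L2) : HasSum (fun k => x k ^ 2) (‖x‖ ^ 2) := by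
  simpa [Real.rpow_two, Real.norm_eq_abs, sq_abs] using lp.hasSum_norm (p := 2) (by norm_num) x

theorem wNorm_sq {f : ℕ → ℝ} (hf₀ : 0 ≤ f) (x : ℕ → ℝ) :
    wNorm f x ^ 2 = ∑' k, f k * x k ^ 2 :=
  Real.sq_sqrt (tsum_nonneg fun k => mul_nonneg (hf₀ k) (sq_nonneg _))

theorem memW_of_forall_gt_eq_zero (f : ℕ → ℝ) {x : ℕ → ℝ} {n : ℕ}
    (hx : ∀ k, n < k → x k = 0) : MemW f x :=
  summable_of_ne_finset_zero (s := Finset.range (n + 1)) fun k hk => by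
    rw [hx k (by simpa using hk)]; ring

theorem wNorm_sq_le_mul_norm_sq {f : ℕ → ℝ} (hf : Monotone f) (hf₀ : 0 ≤ f) {x : L2} {n : ℕ}
    (hx : ∀ k, n < k → x k = 0) : wNorm f x ^ 2 ≤ f n * ‖x‖ ^ 2 := by
  rw [wNorm_sq hf₀]
  refine hasSum_le (fun k => ?_) (memW_of_forall_gt_eq_zero f hx).hasSum
    ((hasSum_sq x).mul_left (f n))
  rcases le_or_gt k n with hk | hk
  · exact mul_le_mul_of_nonneg_right (hf hk) (sq_nonneg _)
  · simp [hx k hk]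

theorem mul_norm_sq_le_wNorm_sq {f : ℕ → ℝ} (hf : Monotone f) (hf₀ : 0 ≤ f) {y : L2} {n : ℕ}
    (hy : ∀ k < n, y k = 0) (hyf : MemW f y) : f n * ‖y‖ ^ 2 ≤ wNorm f y ^ 2 := by
  rw [wNorm_sq hf₀]
  refine hasSum_le (fun k => ?_) ((hasSum_sq y).mul_left (f n)) hyf.hasSum
  rcases lt_or_ge k n with hk | hk
  · simp [hy k hk]
  · exact mul_le_mul_of_nonneg_right (hf hk) (sq_nonneg _)

def extendByZero (n : ℕ) : (Fin n → ℝ) →ₗ[ℝ] L2 where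
  toFun c := ⟨fun k => if h : k < n then c ⟨k, h⟩ else 0,
    (memℓp_zero ((Set.finite_Iio n).subset fun k hk => by
      by_contra h; exact hk (dif_neg h))).of_exponent_ge zero_le⟩
  map_add' c d := by ext k; simp only [lp.coeFn_add, Pi.add_apply]; split_ifs <;> simp
  map_smul' a c := by ext k; simp only [lp.coeFn_smul, Pi.smul_apply]; split_ifs <;> simp

theorem extendByZero_apply {n : ℕ} (c : Fin n → ℝ) (k : ℕ) :
    extendByZero n c k = if h : k < n then c ⟨k, h⟩ else 0 := rfl

theorem exists_ne_zero_vanishing_above_map_vanishing_below (T : L2 →ₗ[ℝ] L2) (n : ℕ) :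
    ∃ x : L2, x ≠ 0 ∧ (∀ k, n < k → x k = 0) ∧ ∀ k < n, T x k = 0 := by
  let F : (Fin (n + 1) → ℝ) →ₗ[ℝ] Fin n → ℝ :=
    LinearMap.pi fun i : Fin n => lp.evalₗ _ 2 (i : ℕ) ∘ₗ T ∘ₗ extendByZero (n + 1)
  obtain ⟨c, hcF, hc⟩ := Submodule.exists_mem_ne_zero_of_ne_bot
    (F.ker_ne_bot_of_finrank_lt (by simp))
  refine ⟨extendByZero (n + 1) c, fun h => hc ?_, fun k hk => dif_neg (by omega),
    fun k hk => congrFun (LinearMap.mem_ker.mp hcF) ⟨k, hk⟩⟩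
  ext i
  simpa [extendByZero_apply, i.is_le] using congrArg (fun x : L2 => x i) h

theorem weight_le_of_isometry {f₁ f₂ : ℕ → ℝ} (hf₁ : Monotone f₁) (hf₁₀ : 0 ≤ f₁)
    (hf₂ : Monotone f₂) (hf₂₀ : 0 ≤ f₂) (Φ : L2 →ₗᵢ[ℝ] L2)
    (hmaps : Set.MapsTo Φ {x : L2 | MemW f₁ x} {x : L2 | MemW f₂ x})
    (hiso : ∀ x : L2, MemW f₁ x → wNorm f₂ (Φ x) = wNorm f₁ x) : f₂ ≤ f₁ := by
  intro n
  obtain ⟨x, hx0, hx, hΦx⟩ :=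
    exists_ne_zero_vanishing_above_map_vanishing_below Φ.toLinearMap n
  have hxf : MemW f₁ x := memW_of_forall_gt_eq_zero f₁ hx
  have key : f₂ n * ‖x‖ ^ 2 ≤ f₁ n * ‖x‖ ^ 2 :=
    calc f₂ n * ‖x‖ ^ 2 = f₂ n * ‖Φ x‖ ^ 2 := by rw [Φ.norm_map]
      _ ≤ wNorm f₂ (Φ x) ^ 2 := mul_norm_sq_le_wNorm_sq hf₂ hf₂₀ hΦx (hmaps hxf)
      _ = wNorm f₁ x ^ 2 := by rw [hiso x hxf]
      _ ≤ f₁ n * ‖x‖ ^ 2 := wNorm_sq_le_mul_norm_sq hf₁ hf₁₀ hx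
  exact le_of_mul_le_mul_right key (pow_pos (norm_pos_iff.mpr hx0) 2)

end WeightedSeq

/-- If a surjective linear isometry `Φ : ℓ² → ℓ²` maps `ℓ²_{f₁}` bijectively
onto `ℓ²_{f₂}` preserving the weighted norms, then `f₁ = f₂`. -/
theorem weight_eq_of_scale_isometry (f₁ f₂ : ℕ → ℝ)
    (h₁ : Admissible f₁) (h₂ : Admissible f₂)
    (Φ : L2 ≃ₗᵢ[ℝ] L2)
    (hbij : Set.BijOn Φ {x : L2 | MemW f₁ x} {x : L2 | MemW f₂ x})
    (hiso : ∀ x : L2, MemW f₁ x → wNorm f₂ (Φ x) = wNorm f₁ x) :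
    f₁ = f₂ := by
  have hsymm : Set.MapsTo Φ.symm {x : L2 | MemW f₂ x} {x : L2 | MemW f₁ x} := fun y hy => by
    obtain ⟨x, hx, rfl⟩ := hbij.surjOn hy
    simpa using hx
  have hiso_symm : ∀ y : L2, MemW f₂ y → wNorm f₁ (Φ.symm y) = wNorm f₂ y := fun y hy => by
    simpa using (hiso _ (hsymm hy)).symm
  have h₁₀ : 0 ≤ f₁ := fun n => (h₁.1 n).le
  have h₂₀ : 0 ≤ f₂ := fun n => (h₂.1 n).le
  exact le_antisymm
    (WeightedSeq.weight_le_of_isometry h₂.2.1 h₂₀ h₁.2.1 h₁₀ Φ.symm.toLinearIsometry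
      hsymm hiso_symm)
    (WeightedSeq.weight_le_of_isometry h₁.2.1 h₁₀ h₂.2.1 h₂₀ Φ.toLinearIsometry
      hbij.mapsTo hiso)
end
end

section
/- Let F₁, F₂ : ℕ≥1 → (ℕ → ℝ) be sequences of admissible functions, and for i ∈ {1,2} define the nested sequence ℓ^{2,F_i}_0 = ℓ² and ℓ^{2,F_i}_k = ℓ²_{P^i_k} for k ≥ 1, where P^i_k = ∏_{j=1}^k F_i(j) is the pointwise product. Suppose there exists k ≥ 1 such that F₁(k) is not equivalent to F₂(k). Then there is no bijective linear map Φ : ℓ² → ℓ² which restricts for every k to a bijection ℓ^{2,F₁}_k → ℓ^{2,F₂}_k and satisfies, for every k, a two-sided bound (1/c_k)·‖x‖_{ℓ^{2,F₁}_k} ≤ ‖Φx‖_{ℓ^{2,F₂}_k} ≤ c_k·‖x‖_{ℓ^{2,F₁}_k} for some constant c_k > 0 and all x ∈ ℓ^{2,F₁}_k. -/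
noncomputable section

/-!
Write `P^i_k` for the level weights, so that `P^i_{k+1} = P^i_k · F_i(k+1)`. For each `n`, a
dimension count gives a nonzero `x` supported in `[0, n]` whose image `y = Φ x` vanishes on
`[0, n)`. Since the factors are monotone, `‖x‖²` at level `k+1` is at most `F₁(k+1)(n)` times
`‖x‖²` at level `k`, and `‖y‖²` at level `k+1` is at least `F₂(k+1)(n)` times `‖y‖²` at level
`k`. Chaining these with the norm bounds of `Φ` on the levels `k` and `k+1` gives
`F₂(k+1) ≤ C · F₁(k+1)`; the same argument for `Φ⁻¹` gives the reverse bound.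
-/

open Finset

def IsBiBounded (a b : ℕ → ℝ) (Φ : L2 → L2) (c : ℝ) : Prop :=
  ∀ x : L2, MemW a x →
    MemW b (Φ x) ∧ wNorm a x ≤ c * wNorm b (Φ x) ∧ wNorm b (Φ x) ≤ c * wNorm a x

lemma IsBiBounded.symm {a b : ℕ → ℝ} {Φ : L2 ≃ₗ[ℝ] L2} {c : ℝ}
    (hΦ : Set.SurjOn Φ {x : L2 | MemW a x} {x : L2 | MemW b x}) (h : IsBiBounded a b Φ c) :
    IsBiBounded b a Φ.symm c := by
  intro y hy
  obtain ⟨x, hx, rfl⟩ := hΦ hy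
  obtain ⟨-, hlow, hup⟩ := h x hx
  rw [Φ.symm_apply_apply]
  exact ⟨hx, hup, hlow⟩

lemma isBiBounded_of_bounds {a b : ℕ → ℝ} {Φ : L2 → L2} {c : ℝ} (hc : 0 < c)
    (hmaps : Set.MapsTo Φ {x : L2 | MemW a x} {x : L2 | MemW b x})
    (h : ∀ x : L2, MemW a x →
      (1 / c) * wNorm a x ≤ wNorm b (Φ x) ∧ wNorm b (Φ x) ≤ c * wNorm a x) :
    IsBiBounded a b Φ c := by
  intro x hx
  obtain ⟨hlow, hup⟩ := h x hx
  refine ⟨hmaps hx, ?_, hup⟩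
  rwa [one_div_mul_eq_div, div_le_iff₀ hc, mul_comm] at hlow

lemma fEquiv_of_le_mul {f g : ℕ → ℝ} {C : ℝ} (hC : 0 < C) (hfg : ∀ n, f n ≤ C * g n)
    (hgf : ∀ n, g n ≤ C * f n) : FEquiv f g := by
  refine ⟨C, hC, fun n => ⟨?_, hgf n⟩⟩
  rw [one_div_mul_eq_div, div_le_iff₀ hC, mul_comm]
  exact hfg n

section WeightedNorm

variable {w f x : ℕ → ℝ} {n : ℕ}

lemma sq_wNorm (hw : ∀ m, 0 ≤ w m) (x : ℕ → ℝ) : wNorm w x ^ 2 = ∑' m, w m * x m ^ 2 :=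
  Real.sq_sqrt (tsum_nonneg fun m => mul_nonneg (hw m) (sq_nonneg _))

lemma wNorm_pos (hw : ∀ m, 0 < w m) (hx : MemW w x) (hx0 : x ≠ 0) : 0 < wNorm w x := by
  obtain ⟨m, hm⟩ := Function.ne_iff.mp hx0
  exact Real.sqrt_pos.mpr <| hx.tsum_pos (fun m => mul_nonneg (hw m).le (sq_nonneg _)) m
    (mul_pos (hw m) (pow_two_pos_of_ne_zero hm))

lemma memW_of_vanishing_gt (hx : ∀ m, n < m → x m = 0) (w : ℕ → ℝ) : MemW w x :=
  summable_of_ne_finset_zero (s := range (n + 1)) fun m hm => by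
    rw [hx m (by simpa using hm)]; ring

lemma sq_wNorm_mul_le_of_vanishing_gt (hw : ∀ m, 0 ≤ w m) (hf : ∀ m, 0 ≤ f m)
    (hfm : Monotone f) (hx : ∀ m, n < m → x m = 0) :
    wNorm (fun m => w m * f m) x ^ 2 ≤ f n * wNorm w x ^ 2 := by
  rw [sq_wNorm (fun m => mul_nonneg (hw m) (hf m)), sq_wNorm hw, ← tsum_mul_left]
  refine (memW_of_vanishing_gt hx _).tsum_le_tsum (fun m => ?_)
    ((memW_of_vanishing_gt hx w).mul_left _)
  rcases le_or_gt m n with hmn | hnm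
  · nlinarith [hfm hmn, mul_nonneg (hw m) (sq_nonneg (x m))]
  · simp [hx m hnm]

lemma mul_sq_wNorm_le_of_vanishing_lt (hw : ∀ m, 0 ≤ w m) (hf : ∀ m, 0 ≤ f m)
    (hfm : Monotone f) (hx : ∀ m < n, x m = 0) (hxf : MemW (fun m => w m * f m) x) :
    f n * wNorm w x ^ 2 ≤ wNorm (fun m => w m * f m) x ^ 2 := by
  rw [sq_wNorm (fun m => mul_nonneg (hw m) (hf m)), sq_wNorm hw, ← tsum_mul_left]
  have hle : ∀ m, f n * (w m * x m ^ 2) ≤ w m * f m * x m ^ 2 := fun m => by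
    rcases lt_or_ge m n with hmn | hnm
    · simp [hx m hmn]
    · nlinarith [hfm hnm, mul_nonneg (hw m) (sq_nonneg (x m))]
  have hnonneg : ∀ m, 0 ≤ f n * (w m * x m ^ 2) := fun m =>
    mul_nonneg (hf n) (mul_nonneg (hw m) (sq_nonneg _))
  exact (hxf.of_nonneg_of_le hnonneg hle).tsum_le_tsum hle hxf

end WeightedNorm

lemma exists_ne_zero_vanishing_gt_map_vanishing_lt (Φ : L2 →ₗ[ℝ] L2) (n : ℕ) :
    ∃ x : L2, ⇑x ≠ 0 ∧ (∀ m, n < m → x m = 0) ∧ ∀ m < n, Φ x m = 0 := by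
  let E : (Fin (n + 1) → ℝ) →ₗ[ℝ] L2 :=
    Fintype.linearCombination ℝ fun j : Fin (n + 1) => lp.single 2 (j : ℕ) (1 : ℝ)
  let P : L2 →ₗ[ℝ] (Fin n → ℝ) := LinearMap.pi fun i => lp.evalₗ _ 2 (i : ℕ)
  have hE : ∀ w m, (E w : ℕ → ℝ) m = ∑ j : Fin (n + 1), if (j : ℕ) = m then w j else 0 :=
    fun w m => by
      rw [Fintype.linearCombination_apply, lp.coeFn_sum, Finset.sum_apply]
      simp [lp.single_apply, Pi.single_apply, eq_comm]
  obtain ⟨w, hw, hw0⟩ := Submodule.ne_bot_iff _ |>.mp <|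
    LinearMap.ker_ne_bot_of_finrank_lt (f := P ∘ₗ Φ ∘ₗ E) (by simp)
  obtain ⟨j, hj⟩ := Function.ne_iff.mp hw0
  refine ⟨E w, fun h => hj ?_, fun m hm => ?_, fun m hm => congrFun hw ⟨m, hm⟩⟩
  · simpa [hE, Fin.val_inj] using congrFun h j
  · rw [hE]
    exact Finset.sum_eq_zero fun i _ => if_neg (by have := i.is_lt; omega)

theorem le_sq_mul_of_isBiBounded {a b f g : ℕ → ℝ} (ha : ∀ n, 0 < a n) (hb : ∀ n, 0 ≤ b n)
    (hf : ∀ n, 0 ≤ f n) (hfm : Monotone f) (hg : ∀ n, 0 ≤ g n) (hgm : Monotone g)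
    {Φ : L2 →ₗ[ℝ] L2} {c c' : ℝ} (h : IsBiBounded a b Φ c)
    (h' : IsBiBounded (fun n => a n * f n) (fun n => b n * g n) Φ c') (n : ℕ) :
    g n ≤ (c * c') ^ 2 * f n := by
  obtain ⟨x, hx0, hx, hΦx⟩ := exists_ne_zero_vanishing_gt_map_vanishing_lt Φ n
  obtain ⟨-, hlow, -⟩ := h x (memW_of_vanishing_gt hx a)
  obtain ⟨hmem, -, hup⟩ := h' x (memW_of_vanishing_gt hx _)
  set N := wNorm b (Φ x)
  have hxpos : 0 < wNorm a x := wNorm_pos ha (memW_of_vanishing_gt hx a) hx0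
  have hN : 0 < N := lt_of_le_of_ne (Real.sqrt_nonneg _) fun hN0 => by
    rw [← hN0, mul_zero] at hlow
    linarith
  have key : g n * N ^ 2 ≤ (c * c') ^ 2 * f n * N ^ 2 :=
    calc g n * N ^ 2 ≤ wNorm (fun m => b m * g m) (Φ x) ^ 2 :=
          mul_sq_wNorm_le_of_vanishing_lt hb hg hgm hΦx hmem
      _ ≤ (c' * wNorm (fun m => a m * f m) x) ^ 2 := pow_le_pow_left₀ (Real.sqrt_nonneg _) hup 2
      _ = c' ^ 2 * wNorm (fun m => a m * f m) x ^ 2 := mul_pow _ _ 2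
      _ ≤ c' ^ 2 * (f n * wNorm a x ^ 2) := by
          gcongr
          exact sq_wNorm_mul_le_of_vanishing_gt (fun m => (ha m).le) hf hfm hx
      _ ≤ c' ^ 2 * (f n * (c * N) ^ 2) := by
          gcongr
          exact hf n
      _ = (c * c') ^ 2 * f n * N ^ 2 := by ring
  exact le_of_mul_le_mul_right key (pow_pos hN 2)

lemma prod_Icc_pos_of_admissible {F : ℕ → ℕ → ℝ} (hF : ∀ k, 1 ≤ k → Admissible (F k))
    (k n : ℕ) :
    0 < ∏ j ∈ Icc 1 k, F j n :=
  prod_pos fun j hj => (hF j (mem_Icc.mp hj).1).1 n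

/-- Nested scales built from sequences of admissible weights, with
`ℓ^{2,F}_k = ℓ²` weighted by `∏_{j=1}^k F j` (the empty product giving `ℓ²`
itself for `k = 0`). If `F₁ k ≁ F₂ k` for some `k ≥ 1`, then there is no
bijective linear map `Φ : ℓ² → ℓ²` restricting on every level to a bijection
with a two-sided norm bound. -/
theorem no_scale_iso_of_nonequiv_factor (F₁ F₂ : ℕ → ℕ → ℝ)
    (h₁ : ∀ k, 1 ≤ k → Admissible (F₁ k)) (h₂ : ∀ k, 1 ≤ k → Admissible (F₂ k))
    (hne : ∃ k, 1 ≤ k ∧ ¬ FEquiv (F₁ k) (F₂ k)) :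
    ¬ ∃ Φ : L2 ≃ₗ[ℝ] L2, ∀ k : ℕ,
      Set.BijOn Φ {x : L2 | MemW (fun n => ∏ j ∈ Finset.Icc 1 k, F₁ j n) x}
        {x : L2 | MemW (fun n => ∏ j ∈ Finset.Icc 1 k, F₂ j n) x} ∧
      ∃ c : ℝ, 0 < c ∧ ∀ x : L2, MemW (fun n => ∏ j ∈ Finset.Icc 1 k, F₁ j n) x →
        (1 / c) * wNorm (fun n => ∏ j ∈ Finset.Icc 1 k, F₁ j n) x ≤
            wNorm (fun n => ∏ j ∈ Finset.Icc 1 k, F₂ j n) (Φ x) ∧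
        wNorm (fun n => ∏ j ∈ Finset.Icc 1 k, F₂ j n) (Φ x) ≤
            c * wNorm (fun n => ∏ j ∈ Finset.Icc 1 k, F₁ j n) x := by
  rintro ⟨Φ, hΦ⟩
  obtain ⟨k, hk, hne⟩ := hne
  obtain ⟨m, rfl⟩ : ∃ m, k = m + 1 := ⟨k - 1, by omega⟩
  have level : ∀ k, ∃ c > 0,
      IsBiBounded (fun n => ∏ j ∈ Icc 1 k, F₁ j n) (fun n => ∏ j ∈ Icc 1 k, F₂ j n) Φ c ∧
      IsBiBounded (fun n => ∏ j ∈ Icc 1 k, F₂ j n) (fun n => ∏ j ∈ Icc 1 k, F₁ j n) Φ.symm c :=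
    fun k => by
      obtain ⟨hbij, c, hc, hbd⟩ := hΦ k
      have h := isBiBounded_of_bounds hc hbij.mapsTo hbd
      exact ⟨c, hc, h, h.symm hbij.surjOn⟩
  obtain ⟨c, hc, hΦm, hΨm⟩ := level m
  obtain ⟨c', hc', hΦk, hΨk⟩ := level (m + 1)
  simp only [prod_Icc_succ_top (Nat.le_add_left 1 m)] at hΦk hΨk
  obtain ⟨hf₁, hf₁m, -⟩ := h₁ (m + 1) hk
  obtain ⟨hf₂, hf₂m, -⟩ := h₂ (m + 1) hk
  have hP₁ := prod_Icc_pos_of_admissible h₁ m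
  have hP₂ := prod_Icc_pos_of_admissible h₂ m
  exact hne <| fEquiv_of_le_mul (by positivity)
    (le_sq_mul_of_isBiBounded hP₂ (fun n => (hP₁ n).le) (fun n => (hf₂ n).le) hf₂m
      (fun n => (hf₁ n).le) hf₁m hΨm hΨk)
    (le_sq_mul_of_isBiBounded hP₁ (fun n => (hP₂ n).le) (fun n => (hf₁ n).le) hf₁m
      (fun n => (hf₂ n).le) hf₂m hΦm hΦk)
end
end

section
/- Let f₁ and f₂ be admissible functions. For a permutation σ of ℕ let ℘_σ(f₁,f₂) denote the monotone rearrangement of the function f₁·(f₂∘σ) (which exists and is unique since f₁(n)·f₂(σ(n)) → ∞). Call a set S₀ of permutations of ℕ (f₁,f₂)-wild if for all σ, σ' ∈ S₀ with σ ≠ σ', the functions ℘_σ(f₁,f₂) and ℘_{σ'}(f₁,f₂) are not equivalent. Then for every finite (f₁,f₂)-wild set S₀ there exists a permutation σ ∉ S₀ such that S₀ ∪ {σ} is (f₁,f₂)-wild. -/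
noncomputable section

/-- `g` is the monotone rearrangement of `u`: `g = u ∘ τ` for some permutation
`τ`, and `g` is monotone nondecreasing. -/
def IsMonoRearrange (u g : ℕ → ℝ) : Prop :=
  ∃ τ : Equiv.Perm ℕ, (∀ n, g n = u (τ n)) ∧ Monotone g

/-- the pointwise product `f₁ · (f₂ ∘ σ)`. -/
def twist (f₁ f₂ : ℕ → ℝ) (σ : Equiv.Perm ℕ) : ℕ → ℝ :=
  fun n => f₁ n * f₂ (σ n)

/-- A set `S` of permutations is `(f₁,f₂)`-wild if for distinct `σ, σ' ∈ S`
the monotone rearrangements `℘_σ(f₁,f₂)` of `f₁·(f₂∘σ)` and `℘_{σ'}(f₁,f₂)`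
of `f₁·(f₂∘σ')` are never equivalent. -/
def Wild (f₁ f₂ : ℕ → ℝ) (S : Set (Equiv.Perm ℕ)) : Prop :=
  ∀ σ ∈ S, ∀ σ' ∈ S, σ ≠ σ' → ∀ g g' : ℕ → ℝ,
    IsMonoRearrange (twist f₁ f₂ σ) g → IsMonoRearrange (twist f₁ f₂ σ') g' →
    ¬ FEquiv g g'

/-!
Choose a sparse sequence `e` such that `(e n + 1) * f₁ (e n) * f₂ (e n)` stays below both
`f₁ (e (n + 1)) * f₂ 0` and `f₁ 0 * f₂ (e (n + 1))`. For each `t`, let `σ_t` exchange the `i`-th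
element of the tail `e (t + 1), e (t + 2), …` with the `i`-th element of its complement. The values
of `f₁ * (f₂ ∘ σ_t)` then come in pairs, the `i`-th pair lying between these two kinds of bounds
at `k = e (t + 1 + i)`. Since the monotone rearrangement `g` of `u` satisfies
`g n ≤ x ↔ n < #{u ≤ x}`, counting values below the levels `T` and `c * T` shows that the
rearrangements for `σ_s` and `σ_t`, `s ≠ t`, are never equivalent. Rearrangements being unique
and equivalence transitive, each member of `S₀` is equivalent to at most one of them, so all but
finitely many `σ_t` extend `S₀`.
-/

open Set Filter Function Nat

theorem IsLowerSet.mem_iff_lt_encard {S : Set ℕ} (hS : IsLowerSet S) {n : ℕ} :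
    n ∈ S ↔ (n : ℕ∞) < S.encard := by
  constructor
  · intro hn
    calc (n : ℕ∞) < (n + 1 : ℕ) := by exact_mod_cast n.lt_succ_self
      _ = {i | i < n + 1}.encard := (Nat.encard_range _).symm
      _ ≤ S.encard := encard_le_encard fun i hi => hS (Nat.lt_succ_iff.1 hi) hn
  · intro hn
    by_contra hnS
    have hsub : S ⊆ {i | i < n} := fun i hi => lt_of_not_ge fun hni => hnS (hS hni hi)
    exact ((encard_le_encard hsub).trans_eq (Nat.encard_range n)).not_gt hn

namespace IsMonoRearrange

variable {u v g g' : ℕ → ℝ}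

theorem le_iff_lt_encard (hg : IsMonoRearrange u g) (x : ℝ) (n : ℕ) :
    g n ≤ x ↔ (n : ℕ∞) < {m | u m ≤ x}.encard := by
  obtain ⟨τ, hτ, hmono⟩ := hg
  have hlower : IsLowerSet {m | g m ≤ x} := fun a b hba ha => (hmono hba).trans ha
  have hpre : {m | g m ≤ x} = τ ⁻¹' {m | u m ≤ x} := by ext m; simp [hτ m]
  rw [← encard_preimage_of_bijective τ.bijective, ← hpre]
  exact hlower.mem_iff_lt_encard

theorem unique (hg : IsMonoRearrange u g) (hg' : IsMonoRearrange u g') : g = g' := by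
  funext n
  exact le_antisymm ((hg.le_iff_lt_encard _ n).2 ((hg'.le_iff_lt_encard _ n).1 le_rfl))
    ((hg'.le_iff_lt_encard _ n).2 ((hg.le_iff_lt_encard _ n).1 le_rfl))

/-- Equivalence `g ∼ g'` forces `{v ≤ c T}` to have at least as many points as `{u ≤ T}`. -/
theorem not_fequiv (hg : IsMonoRearrange u g) (hg' : IsMonoRearrange v g')
    (h : ∀ c > 0, ∃ (T : ℝ) (n : ℕ),
      {m | v m ≤ c * T}.encard ≤ n ∧ (n : ℕ∞) < {m | u m ≤ T}.encard) :
    ¬ FEquiv g g' := by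
  rintro ⟨c, hc, hgg'⟩
  obtain ⟨T, n, hv, hu⟩ := h c hc
  have hgn : g n ≤ T := (hg.le_iff_lt_encard T n).2 hu
  have hg'n : g' n ≤ c * T := (hgg' n).2.trans (mul_le_mul_of_nonneg_left hgn hc.le)
  exact ((hg'.le_iff_lt_encard _ n).1 hg'n).not_ge hv

end IsMonoRearrange

namespace FEquiv

variable {a b c : ℕ → ℝ}

theorem symm (h : FEquiv a b) : FEquiv b a := by
  obtain ⟨k, hk, h⟩ := h
  refine ⟨k, hk, fun n => ⟨?_, ?_⟩⟩
  · rw [one_div, inv_mul_le_iff₀ hk]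
    exact (h n).2
  · have := (h n).1
    rw [one_div, inv_mul_le_iff₀ hk] at this
    exact this

theorem trans (hab : FEquiv a b) (hbc : FEquiv b c) : FEquiv a c := by
  obtain ⟨k, hk, hab⟩ := hab
  obtain ⟨l, hl, hbc⟩ := hbc
  refine ⟨k * l, mul_pos hk hl, fun n => ⟨?_, ?_⟩⟩
  · calc 1 / (k * l) * a n = 1 / l * (1 / k * a n) := by field_simp
      _ ≤ 1 / l * b n := mul_le_mul_of_nonneg_left (hab n).1 (by positivity)
      _ ≤ c n := (hbc n).1
  · calc c n ≤ l * b n := (hbc n).2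
      _ ≤ l * (k * a n) := mul_le_mul_of_nonneg_left (hab n).2 hl.le
      _ = k * l * a n := by ring

end FEquiv

/-- `℘_σ(f₁,f₂) ∼ ℘_τ(f₁,f₂)`. -/
def RearrEquiv (f₁ f₂ : ℕ → ℝ) (σ τ : Equiv.Perm ℕ) : Prop :=
  ∃ g g', IsMonoRearrange (twist f₁ f₂ σ) g ∧ IsMonoRearrange (twist f₁ f₂ τ) g' ∧ FEquiv g g'

namespace RearrEquiv

variable {f₁ f₂ : ℕ → ℝ} {ρ σ τ : Equiv.Perm ℕ}

theorem symm (h : RearrEquiv f₁ f₂ σ τ) : RearrEquiv f₁ f₂ τ σ :=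
  let ⟨g, g', hg, hg', hgg'⟩ := h
  ⟨g', g, hg', hg, hgg'.symm⟩

theorem symm_trans (hσ : RearrEquiv f₁ f₂ ρ σ) (hτ : RearrEquiv f₁ f₂ ρ τ) :
    RearrEquiv f₁ f₂ σ τ := by
  obtain ⟨g, g', hg, hg', hgg'⟩ := hσ
  obtain ⟨h, h', hh, hh', hhh'⟩ := hτ
  exact ⟨g', h', hg', hh', hgg'.symm.trans ((hg.unique hh) ▸ hhh')⟩

end RearrEquiv

theorem wild_iff_pairwise {f₁ f₂ : ℕ → ℝ} {S : Set (Equiv.Perm ℕ)} :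
    Wild f₁ f₂ S ↔ S.Pairwise fun σ τ => ¬ RearrEquiv f₁ f₂ σ τ := by
  simp only [Wild, RearrEquiv, Set.Pairwise, not_exists, not_and]

theorem Set.Finite.exists_notMem_forall_not_rel {α ι : Type*} [Infinite ι] {r : α → α → Prop}
    (hr : ∀ a b c, r a b → r a c → r b c) {P : ι → α} (hP : Injective P)
    (hPr : Pairwise fun s t => ¬ r (P s) (P t)) {S : Set α} (hS : S.Finite) :
    ∃ t, P t ∉ S ∧ ∀ a ∈ S, ¬ r a (P t) := by
  have hbad : (P ⁻¹' S ∪ ⋃ a ∈ S, {t | r a (P t)}).Finite := by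
    refine (hS.preimage hP.injOn).union (hS.biUnion fun a _ => Subsingleton.finite ?_)
    intro s hs t ht
    by_contra hst
    exact hPr hst (hr _ _ _ hs ht)
  obtain ⟨t, ht⟩ := hbad.exists_notMem
  simp only [mem_union, mem_preimage, mem_iUnion, mem_ofPred_eq, not_or, not_exists] at ht
  exact ⟨t, ht.1, ht.2⟩

section NthSwap

variable {p : ℕ → Prop} [DecidablePred p]

def nthSwap (p : ℕ → Prop) [DecidablePred p] (n : ℕ) : ℕ :=
  if p n then nth (¬p ·) (count p n) else nth p (count (¬p ·) n)

theorem exists_eq_nth_or_eq_nth_not (n : ℕ) : ∃ i, n = nth p i ∨ n = nth (¬p ·) i := by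
  by_cases hn : p n
  · exact ⟨_, Or.inl (nth_count hn).symm⟩
  · exact ⟨_, Or.inr (nth_count (p := (¬p ·)) hn).symm⟩

theorem nthSwap_nth (hp : {n | p n}.Infinite) (i : ℕ) : nthSwap p (nth p i) = nth (¬p ·) i := by
  rw [nthSwap, if_pos (nth_mem_of_infinite hp i), count_nth_of_infinite hp]

theorem nthSwap_nth_not (hp' : {n | ¬p n}.Infinite) (i : ℕ) :
    nthSwap p (nth (¬p ·) i) = nth p i := by
  rw [nthSwap, if_neg (nth_mem_of_infinite hp' i), count_nth_of_infinite hp']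

theorem nthSwap_involutive (hp : {n | p n}.Infinite) (hp' : {n | ¬p n}.Infinite) :
    Involutive (nthSwap p) := by
  intro n
  obtain ⟨i, rfl | rfl⟩ := exists_eq_nth_or_eq_nth_not (p := p) n
  · rw [nthSwap_nth hp, nthSwap_nth_not hp']
  · rw [nthSwap_nth_not hp', nthSwap_nth hp]

def nthSwapPerm (hp : {n | p n}.Infinite) (hp' : {n | ¬p n}.Infinite) : Equiv.Perm ℕ :=
  (nthSwap_involutive hp hp').toPerm

end NthSwap

def lowerProd (f₁ f₂ : ℕ → ℝ) (n : ℕ) : ℝ :=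
  min (f₁ n * f₂ 0) (f₁ 0 * f₂ n)

section TwistNthSwap

variable {f₁ f₂ : ℕ → ℝ} (hf₁ : Monotone f₁) (hf₂ : Monotone f₂) (hf₁0 : 0 ≤ f₁) (hf₂0 : 0 ≤ f₂)
  {p : ℕ → Prop} [DecidablePred p] (hp : {n | p n}.Infinite) (hp' : {n | ¬p n}.Infinite)
  (hle : ∀ i, nth (¬p ·) i ≤ nth p i)
include hf₁ hf₂ hf₁0 hf₂0 hp hp' hle

theorem twist_nthSwapPerm_mem_Icc {i n : ℕ} (hn : n = nth p i ∨ n = nth (¬p ·) i) :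
    twist f₁ f₂ (nthSwapPerm hp hp') n ∈
      Icc (lowerProd f₁ f₂ (nth p i)) (f₁ (nth p i) * f₂ (nth p i)) := by
  have hswap : nthSwapPerm hp hp' n = nthSwap p n := rfl
  rcases hn with rfl | rfl
  · rw [twist, hswap, nthSwap_nth hp]
    exact ⟨(min_le_left _ _).trans (mul_le_mul_of_nonneg_left (hf₂ (zero_le _)) (hf₁0 _)),
      mul_le_mul_of_nonneg_left (hf₂ (hle i)) (hf₁0 _)⟩
  · rw [twist, hswap, nthSwap_nth_not hp']
    exact ⟨(min_le_right _ _).trans (mul_le_mul_of_nonneg_right (hf₁ (zero_le _)) (hf₂0 _)),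
      mul_le_mul_of_nonneg_right (hf₁ (hle i)) (hf₂0 _)⟩

theorem encard_twist_nthSwapPerm_le {s : ℝ} {I : ℕ} (hs : s < lowerProd f₁ f₂ (nth p I)) :
    {n | twist f₁ f₂ (nthSwapPerm hp hp') n ≤ s}.encard ≤ 2 * I := by
  have hlow : Monotone (lowerProd f₁ f₂) :=
    (hf₁.mul_const (hf₂0 0)).min (hf₂.const_mul (hf₁0 0))
  have hsub : {n | twist f₁ f₂ (nthSwapPerm hp hp') n ≤ s} ⊆
      nth p '' {i | i < I} ∪ nth (¬p ·) '' {i | i < I} := by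
    intro n hn
    obtain ⟨i, hi⟩ := exists_eq_nth_or_eq_nth_not (p := p) n
    have hiI : i < I := by
      by_contra! hIi
      have hlow_le := (twist_nthSwapPerm_mem_Icc hf₁ hf₂ hf₁0 hf₂0 hp hp' hle hi).1
      exact hs.not_ge ((hlow (nth_monotone hp hIi)).trans (hlow_le.trans hn))
    rcases hi with rfl | rfl
    exacts [Or.inl ⟨i, hiI, rfl⟩, Or.inr ⟨i, hiI, rfl⟩]
  calc _ ≤ _ := encard_le_encard hsub
    _ ≤ _ := encard_union_le _ _
    _ ≤ (I : ℕ∞) + I := by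
      gcongr <;> exact (encard_image_le _ _).trans_eq (Nat.encard_range I)
    _ = 2 * I := (two_mul _).symm

theorem le_encard_twist_nthSwapPerm (I : ℕ) :
    2 * I + 2 ≤
      {n | twist f₁ f₂ (nthSwapPerm hp hp') n ≤ f₁ (nth p I) * f₂ (nth p I)}.encard := by
  have hprod : Monotone fun n => f₁ n * f₂ n := hf₁.mul hf₂ hf₁0 hf₂0
  have hsub : nth p '' {i | i < I + 1} ∪ nth (¬p ·) '' {i | i < I + 1} ⊆
      {n | twist f₁ f₂ (nthSwapPerm hp hp') n ≤ f₁ (nth p I) * f₂ (nth p I)} := by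
    rintro n (⟨i, hi, rfl⟩ | ⟨i, hi, rfl⟩) <;>
    · exact (twist_nthSwapPerm_mem_Icc hf₁ hf₂ hf₁0 hf₂0 hp hp' hle (i := i) (by simp)).2.trans
        (hprod (nth_monotone hp (Nat.lt_succ_iff.1 hi)))
  have hdisj : Disjoint (nth p '' {i | i < I + 1}) (nth (¬p ·) '' {i | i < I + 1}) := by
    rw [disjoint_left]
    rintro _ ⟨i, -, rfl⟩ ⟨j, -, hji⟩
    exact nth_mem_of_infinite hp' j (hji ▸ nth_mem_of_infinite hp i)
  calc (2 * I + 2 : ℕ∞) = (I + 1 : ℕ) + (I + 1 : ℕ) := by push_cast; ring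
    _ = _ := by
      rw [encard_union_eq hdisj, (nth_injective hp).injOn.encard_image,
        (nth_injective hp').injOn.encard_image, Nat.encard_range]
    _ ≤ _ := encard_le_encard hsub

end TwistNthSwap

theorem Admissible.tendsto_atTop {f : ℕ → ℝ} (h : Admissible f) : Tendsto f atTop atTop :=
  tendsto_atTop_atTop_of_monotone' h.2.1 h.2.2

def FastGrowing (f₁ f₂ : ℕ → ℝ) (e : ℕ → ℕ) : Prop :=
  (∀ n, 2 * (e n + 1) ≤ e (n + 1)) ∧
    ∀ n, (e n + 1) * (f₁ (e n) * f₂ (e n)) < lowerProd f₁ f₂ (e (n + 1))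

theorem exists_fastGrowing {f₁ f₂ : ℕ → ℝ} (h₁ : Admissible f₁) (h₂ : Admissible f₂) :
    ∃ e, FastGrowing f₁ f₂ e := by
  have hnext (a : ℕ) :
      ∃ k, 2 * (a + 1) ≤ k ∧ (a + 1) * (f₁ a * f₂ a) < lowerProd f₁ f₂ k := by
    have h₁' := (h₁.tendsto_atTop.atTop_mul_const (h₂.1 0)).eventually_gt_atTop
      ((a + 1) * (f₁ a * f₂ a))
    have h₂' := (h₂.tendsto_atTop.const_mul_atTop (h₁.1 0)).eventually_gt_atTop
      ((a + 1) * (f₁ a * f₂ a))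
    obtain ⟨k, hk, hk₁, hk₂⟩ := ((eventually_ge_atTop _).and (h₁'.and h₂')).exists
    exact ⟨k, hk, lt_min hk₁ hk₂⟩
  choose next hnext using hnext
  refine ⟨fun n => next^[n] 0, fun n => ?_, fun n => ?_⟩ <;> simp only [iterate_succ_apply']
  exacts [(hnext _).1, (hnext _).2]

theorem Nat.count_add_count_not (p : ℕ → Prop) [DecidablePred p] (n : ℕ) :
    count p n + count (¬p ·) n = n := by
  simp only [count_eq_card_filter_range, Finset.card_filter_add_card_filter_not, Finset.card_range]

section Tail

open scoped Classical

variable {e : ℕ → ℕ} (he : ∀ n, 2 * (e n + 1) ≤ e (n + 1))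
include he

theorem strictMono_of_two_mul_succ_le : StrictMono e :=
  strictMono_nat_of_lt_succ fun n => by linarith [he n]

def InTail (e : ℕ → ℕ) (t n : ℕ) : Prop := ∃ i, e (i + t + 1) = n

theorem nth_inTail (t i : ℕ) : nth (InTail e t) i = e (i + t + 1) := by
  have hmono : StrictMono fun i => e (i + t + 1) :=
    (strictMono_of_two_mul_succ_le he).comp fun a b hab => by omega
  have := nth_comp_of_strictMono (p := InTail e t) (n := i) hmono (fun _ h => h)
    fun hfin => absurd hfin (infinite_range_of_injective hmono.injective)
  rw [nth_of_forall fun _ _ => ⟨_, rfl⟩] at this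
  exact this.symm

theorem infinite_inTail (t : ℕ) : {n | InTail e t n}.Infinite :=
  infinite_range_of_injective ((strictMono_of_two_mul_succ_le he).injective.comp
    fun a b hab => by simpa using hab)

theorem infinite_not_inTail (t : ℕ) : {n | ¬InTail e t n}.Infinite := by
  have hmono := strictMono_of_two_mul_succ_le he
  refine infinite_of_injective_forall_mem (f := fun k => e k + 1)
    (fun a b hab => hmono.injective (by simpa using hab)) fun k ⟨i, hi⟩ => ?_
  have h₁ : e k < e (i + t + 1) := by omega
  have h₂ : e (i + t + 1) < e (k + 1) := by linarith [he k]
  rw [hmono.lt_iff_lt] at h₁ h₂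
  omega

theorem nth_not_inTail_le (t i : ℕ) : nth (¬InTail e t ·) i ≤ nth (InTail e t) i := by
  refine (nth_lt_of_lt_count ?_).le
  have hcount : count (InTail e t) (nth (InTail e t) i) = i :=
    count_nth_of_infinite (infinite_inTail he t) i
  have htot := count_add_count_not (InTail e t) (nth (InTail e t) i)
  have hlarge : 2 * (i + t + 1) ≤ nth (InTail e t) i := by
    rw [nth_inTail he]
    have := (strictMono_of_two_mul_succ_le he).le_apply (x := i + t)
    have := he (i + t)
    omega
  omega

def tailSwap (t : ℕ) : Equiv.Perm ℕ :=
  nthSwapPerm (infinite_inTail he t) (infinite_not_inTail he t)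

theorem tailSwap_apply_zero (t : ℕ) : tailSwap he t 0 = e (t + 1) := by
  have h0 : ¬InTail e t 0 := fun ⟨i, hi⟩ => by have := he (i + t); omega
  change nthSwap _ 0 = _
  rw [nthSwap, if_neg h0, count_zero, nth_inTail he, zero_add]

theorem tailSwap_injective : Injective (tailSwap he) := fun s t hst => by
  have := congrArg (· 0) hst
  simp only [tailSwap_apply_zero he] at this
  exact Nat.add_right_cancel ((strictMono_of_two_mul_succ_le he).injective this)

end Tail

section FastGrowing

open scoped Classical

variable {f₁ f₂ : ℕ → ℝ} (hf₁ : Monotone f₁) (hf₂ : Monotone f₂) (hf₁0 : 0 ≤ f₁) (hf₂0 : 0 ≤ f₂)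
  {e : ℕ → ℕ} (he : FastGrowing f₁ f₂ e)
include hf₁ hf₂ hf₁0 hf₂0 he

/-- `T` is the top of the `I`-th pair of values of `tailSwap s`, so at least `2 * I + 2` values
lie below it; once `I ≥ c`, the growth of `e` puts `c * T` below the `I`-th pair of `tailSwap t`,
so at most `2 * I` of its values lie below `c * T`. -/
theorem exists_encard_twist_tailSwap_lt {s t : ℕ} (hst : s < t) (c : ℝ) :
    ∃ (T : ℝ) (n : ℕ), {m | twist f₁ f₂ (tailSwap he.1 t) m ≤ c * T}.encard ≤ n ∧
      (n : ℕ∞) < {m | twist f₁ f₂ (tailSwap he.1 s) m ≤ T}.encard := by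
  obtain ⟨I, hI⟩ := exists_nat_ge c
  have hprod : Monotone fun n => f₁ n * f₂ n := hf₁.mul hf₂ hf₁0 hf₂0
  have hemono := strictMono_of_two_mul_succ_le he.1
  refine ⟨f₁ (e (I + s + 1)) * f₂ (e (I + s + 1)), 2 * I, ?_, ?_⟩
  · push_cast
    refine encard_twist_nthSwapPerm_le hf₁ hf₂ hf₁0 hf₂0 _ _ (nth_not_inTail_le he.1 t) ?_
    rw [nth_inTail he.1]
    have hcM : c ≤ e (I + t) + 1 := by
      have : I ≤ e (I + t) + 1 := by have := hemono.le_apply (x := I + t); omega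
      exact hI.trans (by exact_mod_cast this)
    calc c * (f₁ (e (I + s + 1)) * f₂ (e (I + s + 1)))
        ≤ (e (I + t) + 1) * (f₁ (e (I + t)) * f₂ (e (I + t))) :=
          mul_le_mul hcM (hprod (hemono.monotone (by omega))) (mul_nonneg (hf₁0 _) (hf₂0 _))
            (by positivity)
      _ < _ := he.2 (I + t)
  · have := le_encard_twist_nthSwapPerm hf₁ hf₂ hf₁0 hf₂0 (infinite_inTail he.1 s)
      (infinite_not_inTail he.1 s) (nth_not_inTail_le he.1 s) I
    rw [nth_inTail he.1] at this
    refine lt_of_lt_of_le ?_ this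
    exact_mod_cast (by omega : 2 * I < 2 * I + 2)

theorem pairwise_not_rearrEquiv_tailSwap :
    Pairwise fun s t => ¬RearrEquiv f₁ f₂ (tailSwap he.1 s) (tailSwap he.1 t) := by
  have hlt {s t : ℕ} (hst : s < t) : ¬RearrEquiv f₁ f₂ (tailSwap he.1 s) (tailSwap he.1 t) :=
    fun ⟨_, _, hg, hg', hgg'⟩ => hg.not_fequiv hg'
      (fun c _ => exists_encard_twist_tailSwap_lt hf₁ hf₂ hf₁0 hf₂0 he hst c) hgg'
  intro s t hst
  rcases hst.lt_or_gt with h | h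
  exacts [hlt h, fun hr => hlt h hr.symm]

end FastGrowing

/-- Every finite `(f₁,f₂)`-wild set of permutations can be enlarged by one
further permutation, staying `(f₁,f₂)`-wild. -/
theorem wild_set_extend (f₁ f₂ : ℕ → ℝ) (h₁ : Admissible f₁) (h₂ : Admissible f₂)
    (S₀ : Set (Equiv.Perm ℕ)) (hfin : S₀.Finite) (hwild : Wild f₁ f₂ S₀) :
    ∃ σ : Equiv.Perm ℕ, σ ∉ S₀ ∧ Wild f₁ f₂ (insert σ S₀) := by
  obtain ⟨e, he⟩ := exists_fastGrowing h₁ h₂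
  have hpair := pairwise_not_rearrEquiv_tailSwap h₁.2.1 h₂.2.1 (fun n => (h₁.1 n).le)
    (fun n => (h₂.1 n).le) he
  obtain ⟨t, htS, ht⟩ := hfin.exists_notMem_forall_not_rel (r := RearrEquiv f₁ f₂)
    (fun _ _ _ => RearrEquiv.symm_trans) (tailSwap_injective he.1) hpair
  refine ⟨tailSwap he.1 t, htS, ?_⟩
  rw [wild_iff_pairwise] at hwild ⊢
  exact hwild.insert fun σ hσ _ => ⟨fun h => ht σ hσ h.symm, ht σ hσ⟩
end
end
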